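/- arXiv:2410.12282 — 8 statements merged into one kernel-verified Lean document; each statement's English description precedes it below -/
import Mathlib

section
/- Let G be a finite group and g ∈ G. Then the number of pairs (x, y) ∈ G × G with x y x⁻¹ y⁻¹ = g equals |G| · Σ_χ χ(g)/χ(1), where the sum runs over the characters χ of a complete set of representatives of the isomorphism classes of finite-dimensional complex irreducible representations of G (Frobenius' formula). -/
/-!
Column orthogonality, `∑_χ χ(1) χ(h) = |G| · [h = 1]`, turns the count into
`|G| · N(g) = ∑_χ χ(1) ∑_{x,y} χ([x,y]⁻¹ g)`. For an irreducible `χ`, Schur's lemma makes every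
equivariant endomorphism `T` a scalar, so `χ(1) · tr (T ρ(h)) = tr T · χ(h)`. Applied to
`∑_y ρ(y x y⁻¹)` and to `∑_x χ(x⁻¹) ρ(x)` this evaluates the inner double sum as
`|G|² χ(g) / χ(1)²`.

Column orthogonality holds because the class function `h ↦ ∑_χ χ(1) χ(h⁻¹) - |G| · [h = 1]` is
orthogonal to every irreducible character. Hence its group algebra element acts by zero on every
simple module, and so on the semisimple module `ℂ[G]` itself (Maschke), which forces it to vanish.
-/

open CategoryTheory

open scoped MonoidAlgebra

universe u

namespace Representation

variable {k G : Type*} [Field k] [Monoid G]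
  (M : Type*) [AddCommGroup M] [Module k M] [Module k[G] M] [IsScalarTower k k[G] M]

@[simp]
theorem ofModule'_asAlgebraHom_apply (r : k[G]) (m : M) :
    (ofModule' (k := k) (G := G) M).asAlgebraHom r m = r • m := by
  simp [asAlgebraHom_def, ofModule']

noncomputable def ofModule'AsModuleEquiv :
    (ofModule' (k := k) (G := G) M).asModule ≃ₗ[k[G]] M where
  __ := (ofModule' M).asModuleEquiv
  map_smul' r m := by simp [asModuleEquiv_map_smul]

instance isIrreducible_ofModule' [IsSimpleModule k[G] M] :
    (ofModule' (k := k) (G := G) M).IsIrreducible :=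
  (irreducible_iff_isSimpleModule_asModule _).mpr (IsSimpleModule.congr (ofModule'AsModuleEquiv M))

end Representation

theorem FDRep.simple_of_isIrreducible {k : Type u} [Field k] {G : Type*} [Monoid G]
    {V : Type u} [AddCommGroup V] [Module k V] [FiniteDimensional k V]
    (ρ : Representation k G V) [ρ.IsIrreducible] : Simple (FDRep.of ρ) := by
  have := (Representation.irreducible_iff_isSimpleModule_asModule ρ).mp ‹_›
  have : Simple (Rep.toModuleMonoidAlgebra.obj ((forget₂ (FDRep k G) (Rep k G)).obj (.of ρ))) :=
    (simple_iff_isSimpleModule' _).mpr this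
  have := (simple_obj_iff Rep.toModuleMonoidAlgebra _).mp this
  exact (forget₂ (FDRep k G) (Rep k G)).simple_of_simple_obj _

theorem MonoidAlgebra.eq_zero_of_forall_simple_asAlgebraHom_eq_zero {k G : Type u} [Field k]
    [Group G] [Finite G] [NeZero (Nat.card G : k)] (z : k[G])
    (h : ∀ X : FDRep k G, Simple X → Representation.asAlgebraHom X.ρ z = 0) : z = 0 := by
  have hsimple (S : Submodule k[G] k[G]) (_ : IsSimpleModule k[G] S) : z ∈ S.annihilator := by
    refine Submodule.mem_annihilator.mpr fun s hs => ?_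
    have hz := h _ (FDRep.simple_of_isIrreducible (Representation.ofModule' S))
    simpa using congrArg Subtype.val (LinearMap.congr_fun hz ⟨s, hs⟩)
  have htop : z ∈ (⊤ : Submodule k[G] k[G]).annihilator := by
    rw [← IsSemisimpleModule.sSup_simples_eq_top, sSup_eq_iSup', Submodule.annihilator_iSup,
      Submodule.mem_iInf]
    exact fun S => hsimple S.1 S.2
  simpa using Submodule.mem_annihilator.mp htop 1 trivial

namespace FDRep

section Schur

variable {k : Type u} [Field k] {G : Type*} [Group G]

@[simp]
theorem trace_ρ (V : FDRep k G) (g : G) : LinearMap.trace k V (V.ρ g) = V.character g := rfl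

theorem char_one_ne_zero [CharZero k] (V : FDRep k G) [Simple V] : V.character 1 ≠ 0 := by
  rw [char_one, Nat.cast_ne_zero, Ne, Module.finrank_eq_zero_iff_of_free]
  intro hV
  apply id_nonzero V
  ext x
  exact Subsingleton.elim _ _

variable [IsAlgClosed k]

theorem exists_eq_smul_one_of_commute (V : FDRep k G) [Simple V]
    (T : Module.End k V) (hT : ∀ g, Commute T (V.ρ g)) : ∃ c : k, T = c • 1 := by
  let φ : V ⟶ V := ⟨FGModuleCat.ofHom T, fun g => by ext v; exact LinearMap.congr_fun (hT g) v⟩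
  obtain ⟨c, hc⟩ := endomorphism_simple_eq_smul_id k φ
  exact ⟨c, congrArg (fun ψ : V ⟶ V => ψ.hom.hom.hom) hc.symm⟩

variable [CharZero k]

theorem eq_trace_div_smul_one_of_commute (V : FDRep k G) [Simple V]
    (T : Module.End k V) (hT : ∀ g, Commute T (V.ρ g)) :
    T = (LinearMap.trace k V T / V.character 1) • 1 := by
  obtain ⟨c, rfl⟩ := exists_eq_smul_one_of_commute V T hT
  rw [map_smul, LinearMap.trace_one, ← char_one, smul_eq_mul,
    mul_div_cancel_right₀ _ (char_one_ne_zero V)]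

theorem trace_mul_ρ_of_commute (V : FDRep k G) [Simple V]
    (T : Module.End k V) (hT : ∀ g, Commute T (V.ρ g)) (h : G) :
    LinearMap.trace k V (T * V.ρ h) = LinearMap.trace k V T * V.character h / V.character 1 := by
  conv_lhs => rw [eq_trace_div_smul_one_of_commute V T hT]
  rw [smul_mul_assoc, one_mul, map_smul, smul_eq_mul, div_mul_eq_mul_div, trace_ρ]

end Schur

section Sums

variable {k : Type u} [Field k] {G : Type*} [Group G] [Fintype G]

theorem commute_sum_ρ_conj (V : FDRep k G) (a g : G) :
    Commute (∑ y, V.ρ (y * a * y⁻¹)) (V.ρ g) := by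
  rw [Commute, SemiconjBy, Finset.sum_mul, Finset.mul_sum]
  refine Fintype.sum_equiv (Equiv.mulLeft g⁻¹) _ _ fun y => ?_
  simp only [Equiv.coe_mulLeft, ← map_mul]
  group

theorem commute_sum_smul_ρ (V : FDRep k G) (f : G → k) (hf : ∀ g x, f (g * x * g⁻¹) = f x)
    (g : G) : Commute (∑ x, f x • V.ρ x) (V.ρ g) := by
  rw [Commute, SemiconjBy, Finset.sum_mul, Finset.mul_sum]
  refine Fintype.sum_equiv (MulAut.conj g⁻¹).toEquiv _ _ fun x => ?_
  have hfx : f (g⁻¹ * x * g) = f x := by simpa using hf g⁻¹ x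
  simp only [MulEquiv.toEquiv_eq_coe, MulEquiv.coe_toEquiv, MulAut.conj_apply, inv_inv, hfx,
    smul_mul_assoc, mul_smul_comm, ← map_mul, ← mul_assoc, mul_inv_cancel, one_mul]

variable [IsAlgClosed k] [CharZero k]

open scoped Classical in
theorem sum_char_mul_char_inv (V W : FDRep k G) [Simple V] [Simple W] :
    ∑ g, V.character g * W.character g⁻¹ =
      if Nonempty (V ≅ W) then (Fintype.card G : k) else 0 := by
  have hG : (Nat.card G : k) ≠ 0 := NeZero.ne _
  let := invertibleOfNonzero hG
  have h := char_orthonormal V W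
  rw [inv_mul_eq_iff_eq_mul₀ hG] at h
  rw [h, Fintype.card_eq_nat_card]
  split_ifs <;> simp

theorem sum_char_conj_mul (V : FDRep k G) [Simple V] (a b : G) :
    ∑ y, V.character (y * a * y⁻¹ * b) =
      Fintype.card G * V.character a * V.character b / V.character 1 := by
  have key := trace_mul_ρ_of_commute V _ (commute_sum_ρ_conj V a) b
  simp only [Finset.sum_mul, map_sum, ← map_mul, trace_ρ, char_conj, Finset.sum_const,
    Finset.card_univ, nsmul_eq_mul] at key
  rw [key, mul_assoc]

theorem sum_char_mul_char_inv_mul (V : FDRep k G) [Simple V] (g : G) :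
    ∑ x, V.character x * V.character (x⁻¹ * g) =
      Fintype.card G * V.character g / V.character 1 := by
  have hclass (h x : G) : V.character (h * x * h⁻¹)⁻¹ = V.character x⁻¹ := by
    rw [mul_inv_rev, mul_inv_rev, inv_inv, ← mul_assoc, char_conj]
  have key := trace_mul_ρ_of_commute V _ (commute_sum_smul_ρ V (fun x => V.character x⁻¹) hclass) g
  simp only [Finset.sum_mul, map_sum, smul_mul_assoc, ← map_mul, map_smul, smul_eq_mul,
    trace_ρ] at key
  have hnorm : ∑ x, V.character x⁻¹ * V.character x = Fintype.card G := by
    simpa [mul_comm, if_pos (⟨Iso.refl V⟩ : Nonempty (V ≅ V))] using sum_char_mul_char_inv V V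
  rw [← Finset.sum_mul, hnorm] at key
  rw [← key]
  exact Fintype.sum_equiv (Equiv.inv G) _ _ fun x => by simp

theorem sum_sum_char_inv_commutator_mul (V : FDRep k G) [Simple V] (g : G) :
    ∑ x, ∑ y, V.character ((x * y * x⁻¹ * y⁻¹)⁻¹ * g) =
      Fintype.card G ^ 2 * V.character g / V.character 1 ^ 2 := by
  have hcomm (x y : G) : (x * y * x⁻¹ * y⁻¹)⁻¹ * g = y * x * y⁻¹ * (x⁻¹ * g) := by group
  calc ∑ x, ∑ y, V.character ((x * y * x⁻¹ * y⁻¹)⁻¹ * g)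
      = ∑ x, Fintype.card G * V.character x * V.character (x⁻¹ * g) / V.character 1 := by
        simp only [hcomm, sum_char_conj_mul]
    _ = Fintype.card G / V.character 1 * ∑ x, V.character x * V.character (x⁻¹ * g) := by
        rw [Finset.mul_sum]
        exact Finset.sum_congr rfl fun x _ => by ring
    _ = Fintype.card G ^ 2 * V.character g / V.character 1 ^ 2 := by
        rw [sum_char_mul_char_inv_mul]
        ring

end Sums

section Completeness

variable {k G : Type u} [Field k] [IsAlgClosed k] [CharZero k] [Group G] [Fintype G]

theorem eq_zero_of_forall_sum_mul_char_eq_zero (f : G → k) (hf : ∀ g x, f (g * x * g⁻¹) = f x)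
    (horth : ∀ W : FDRep k G, Simple W → ∑ x, f x * W.character x = 0) : f = 0 := by
  have hz := MonoidAlgebra.eq_zero_of_forall_simple_asAlgebraHom_eq_zero
    (∑ x, MonoidAlgebra.single x (f x)) fun W _ => by
      simp only [map_sum, Representation.asAlgebraHom_single]
      rw [eq_trace_div_smul_one_of_commute W _ (commute_sum_smul_ρ W f hf)]
      simp [map_sum, horth W ‹_›]
  classical
  funext x
  have := congrArg (fun z : k[G] => z.coeff x) hz
  simpa [Finsupp.single_apply] using this

open scoped Classical in
theorem sum_char_one_mul_char {ι : Type*} [Fintype ι] (V : ι → FDRep k G)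
    (hsimple : ∀ i, Simple (V i)) (hdistinct : ∀ i j : ι, Nonempty (V i ≅ V j) → i = j)
    (hcomplete : ∀ W : FDRep k G, Simple W → ∃ i, Nonempty (W ≅ V i)) (h : G) :
    ∑ i, (V i).character 1 * (V i).character h = if h = 1 then (Fintype.card G : k) else 0 := by
  have := hsimple
  let f : G → k := fun x =>
    ∑ i, (V i).character 1 * (V i).character x⁻¹ - if x = 1 then (Fintype.card G : k) else 0
  have hf (g x : G) : f (g * x * g⁻¹) = f x := by
    simp only [f, mul_inv_rev, inv_inv, ← mul_assoc, char_conj, conj_eq_one_iff]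
  have horth (W : FDRep k G) (_ : Simple W) : ∑ x, f x * W.character x = 0 := by
    obtain ⟨j, ⟨e⟩⟩ := hcomplete W ‹_›
    have hiso (i : ι) : Nonempty (W ≅ V i) ↔ i = j :=
      ⟨fun ⟨e'⟩ => hdistinct i j ⟨e'.symm ≪≫ e⟩, fun hij => hij ▸ ⟨e⟩⟩
    have hW (i : ι) : ∑ x, W.character x * (V i).character x⁻¹ =
        if i = j then (Fintype.card G : k) else 0 := by
      simp only [sum_char_mul_char_inv, hiso]
    simp only [f, sub_mul, Finset.sum_sub_distrib, Finset.sum_mul, ite_mul, zero_mul]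
    rw [Finset.sum_comm]
    simp only [mul_assoc, mul_comm ((V _).character _⁻¹), ← Finset.mul_sum, hW]
    simp [char_iso e, mul_comm]
  simpa [f, sub_eq_zero] using congrFun (eq_zero_of_forall_sum_mul_char_eq_zero f hf horth) h⁻¹

end Completeness

end FDRep


/-- Frobenius' formula: for a finite group `G` and `g ∈ G`, the number of pairs
`(x, y)` with `x y x⁻¹ y⁻¹ = g` equals `|G| · Σ_χ χ(g)/χ(1)`, the sum running over the
characters of a complete set of representatives of the isomorphism classes of
finite-dimensional complex irreducible representations of `G`. -/
theorem frobenius_formula {G : Type} [Group G] [Fintype G]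
    {ι : Type} [Fintype ι] (V : ι → FDRep ℂ G)
    (hsimple : ∀ i, Simple (V i))
    (hdistinct : ∀ i j : ι, Nonempty (V i ≅ V j) → i = j)
    (hcomplete : ∀ W : FDRep ℂ G, Simple W → ∃ i, Nonempty (W ≅ V i))
    (g : G) :
    (Nat.card {p : G × G // p.1 * p.2 * p.1⁻¹ * p.2⁻¹ = g} : ℂ) =
      (Fintype.card G : ℂ) * ∑ i, (V i).character g / (V i).character 1 := by
  classical
  have := hsimple
  have hdelta (c : G) : (if c = g then (Fintype.card G : ℂ) else 0) =
      ∑ i, (V i).character 1 * (V i).character (c⁻¹ * g) := by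
    rw [FDRep.sum_char_one_mul_char V hsimple hdistinct hcomplete, inv_mul_eq_one]
  apply mul_left_cancel₀ (Nat.cast_ne_zero.mpr Fintype.card_ne_zero : (Fintype.card G : ℂ) ≠ 0)
  calc (Fintype.card G : ℂ) * Nat.card {p : G × G // p.1 * p.2 * p.1⁻¹ * p.2⁻¹ = g}
      = ∑ x, ∑ y, if x * y * x⁻¹ * y⁻¹ = g then (Fintype.card G : ℂ) else 0 := by
        rw [Nat.card_eq_fintype_card, Fintype.card_subtype, Finset.card_filter,
          ← Fintype.sum_prod_type']
        push_cast
        simp only [Finset.mul_sum, mul_ite, mul_one, mul_zero]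
    _ = ∑ i, (V i).character 1 * ∑ x, ∑ y, (V i).character ((x * y * x⁻¹ * y⁻¹)⁻¹ * g) := by
        simp only [hdelta, Finset.mul_sum]
        exact (Finset.sum_congr rfl fun _ _ => Finset.sum_comm).trans Finset.sum_comm
    _ = Fintype.card G * (Fintype.card G * ∑ i, (V i).character g / (V i).character 1) := by
        simp only [FDRep.sum_sum_char_inv_commutator_mul, Finset.mul_sum]
        refine Finset.sum_congr rfl fun i _ => ?_
        field_simp [FDRep.char_one_ne_zero (V i)]
end

section
/- Let G be a compact Hausdorff topological group and let g ∈ G be an element whose conjugacy class {a g a⁻¹ : a ∈ G} is infinite. Then μ²(α⁻¹(g)) = 0. -/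
/-!
Conjugating both coordinates by `a` is a measure-preserving bijection of `G × G` (Haar
probability measure on a compact group is bi-invariant) that carries the commutator fiber over
`c` onto the fiber over `a c a⁻¹`, so all fibers over the conjugacy class of `g` have the same
measure `m`. Fibers over `n` distinct points are compact and lie in the preimages of pairwise
disjoint open sets. These fibers need not be measurable for the product σ-algebra, but covering
each by finitely many open boxes gives disjoint measurable neighbourhoods, so `n * m ≤ 1` for
every `n`, whence `m = 0`.
-/

open MeasureTheory Measure
open scoped commutatorElement

theorem IsCompact.exists_measurableSet_subset_of_subset_isOpen {α β : Type*}
    [TopologicalSpace α] [TopologicalSpace β] [MeasurableSpace α] [MeasurableSpace β]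
    [OpensMeasurableSpace α] [OpensMeasurableSpace β] {K U : Set (α × β)}
    (hK : IsCompact K) (hU : IsOpen U) (hKU : K ⊆ U) :
    ∃ A, MeasurableSet A ∧ K ⊆ A ∧ A ⊆ U := by
  have hbox : ∀ p ∈ K, ∃ V : Set α, ∃ W : Set β,
      IsOpen V ∧ IsOpen W ∧ p ∈ V ×ˢ W ∧ V ×ˢ W ⊆ U := fun p hp => by
    obtain ⟨V, W, hV, hW, hpV, hpW, hVW⟩ := isOpen_prod_iff.1 hU p.1 p.2 (hKU hp)
    exact ⟨V, W, hV, hW, ⟨hpV, hpW⟩, hVW⟩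
  choose! V W hV hW hpVW hVWU using hbox
  obtain ⟨t, htK, hKt⟩ := hK.elim_nhds_subcover (fun p => V p ×ˢ W p)
    fun p hp => ((hV p hp).prod (hW p hp)).mem_nhds (hpVW p hp)
  refine ⟨⋃ p ∈ t, V p ×ˢ W p, ?_, hKt, Set.iUnion₂_subset fun p hp => hVWU p (htK p hp)⟩
  exact t.measurableSet_biUnion fun p hp =>
    (hV p (htK p hp)).measurableSet.prod (hW p (htK p hp)).measurableSet

theorem sum_measure_le_measure_biUnion_of_pairwiseDisjoint_isOpen {α β ι : Type*}
    [TopologicalSpace α] [TopologicalSpace β] [MeasurableSpace α] [MeasurableSpace β]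
    [OpensMeasurableSpace α] [OpensMeasurableSpace β] (ρ : Measure (α × β)) {s : Finset ι}
    {K U : ι → Set (α × β)} (hK : ∀ i ∈ s, IsCompact (K i)) (hU : ∀ i ∈ s, IsOpen (U i))
    (hKU : ∀ i ∈ s, K i ⊆ U i) (hd : (s : Set ι).PairwiseDisjoint U) :
    ∑ i ∈ s, ρ (K i) ≤ ρ (⋃ i ∈ s, U i) := by
  have hA : ∀ i ∈ s, ∃ A, MeasurableSet A ∧ K i ⊆ A ∧ A ⊆ U i := fun i hi =>
    (hK i hi).exists_measurableSet_subset_of_subset_isOpen (hU i hi) (hKU i hi)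
  choose! A hAm hKA hAU using hA
  calc ∑ i ∈ s, ρ (K i)
      ≤ ∑ i ∈ s, ρ (A i) := Finset.sum_le_sum fun i hi => measure_mono (hKA i hi)
    _ = ρ (⋃ i ∈ s, A i) :=
      (measure_biUnion_finset (hd.mono_on fun i hi => hAU i hi) hAm).symm
    _ ≤ ρ (⋃ i ∈ s, U i) := measure_mono (Set.biUnion_mono subset_rfl hAU)

section HaarProbability

variable {G : Type*} [Group G] [TopologicalSpace G] [IsTopologicalGroup G]
  [LocallyCompactSpace G] [MeasurableSpace G] [BorelSpace G]
  (μ : Measure G) [μ.IsHaarMeasure] [IsProbabilityMeasure μ]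

theorem isMulRightInvariant_of_isProbabilityMeasure : μ.IsMulRightInvariant where
  map_mul_right_eq_self a :=
    have : IsProbabilityMeasure (μ.map (· * a)) :=
      isProbabilityMeasure_map (measurable_mul_const a).aemeasurable
    isHaarMeasure_eq_of_isProbabilityMeasure _ μ

theorem measurePreserving_conj_of_isProbabilityMeasure (a : G) :
    MeasurePreserving (fun x => a * x * a⁻¹) μ μ :=
  have := isMulRightInvariant_of_isProbabilityMeasure μ
  (measurePreserving_mul_right μ a⁻¹).comp (measurePreserving_mul_left μ a)

end HaarProbability

section CommutatorFiber

variable {G : Type*} [Group G]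

def commutatorFiber (c : G) : Set (G × G) := {p | ⁅p.1, p.2⁆ = c}

theorem preimage_conj_commutatorFiber (a c : G) :
    Prod.map (fun x => a * x * a⁻¹) (fun x => a * x * a⁻¹) ⁻¹' commutatorFiber (a * c * a⁻¹) =
      commutatorFiber c := by
  ext p
  simp only [commutatorFiber, Set.mem_preimage, Set.mem_ofPred_eq, Prod.map_fst, Prod.map_snd,
    ← MulAut.conj_apply, ← map_commutatorElement, (MulAut.conj a).injective.eq_iff]

variable [TopologicalSpace G] [IsTopologicalGroup G]

theorem continuous_commutatorElement : Continuous fun p : G × G => ⁅p.1, p.2⁆ := by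
  simp only [commutatorElement_def]
  fun_prop

theorem isClosed_commutatorFiber [T1Space G] (c : G) : IsClosed (commutatorFiber c) :=
  isClosed_singleton.preimage continuous_commutatorElement

theorem measure_commutatorFiber_conj [LocallyCompactSpace G] [MeasurableSpace G] [BorelSpace G]
    (μ : Measure G) [μ.IsHaarMeasure] [IsProbabilityMeasure μ] (a c : G) :
    μ.prod μ (commutatorFiber (a * c * a⁻¹)) = μ.prod μ (commutatorFiber c) := by
  have hconj := measurePreserving_conj_of_isProbabilityMeasure μ a
  have hemb : MeasurableEmbedding fun x => a * x * a⁻¹ :=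
    ((Homeomorph.mulLeft a).trans (Homeomorph.mulRight a⁻¹)).measurableEmbedding
  rw [← (hconj.prod hconj).measure_preimage_emb (hemb.prodMap hemb),
    preimage_conj_commutatorFiber]

end CommutatorFiber

/-- For a compact Hausdorff topological group `G` with normalized Haar measure `μ`, if the
conjugacy class of `g` is infinite then the fiber of the commutator map over `g` has
`μ × μ`-measure zero. -/
theorem commutator_fiber_measure_zero_of_infinite_class {G : Type*} [Group G]
    [TopologicalSpace G] [IsTopologicalGroup G] [CompactSpace G] [T2Space G]
    [MeasurableSpace G] [BorelSpace G]
    (μ : Measure G) [μ.IsHaarMeasure] [IsProbabilityMeasure μ]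
    (g : G) (hg : ({x : G | ∃ a : G, a * g * a⁻¹ = x} : Set G).Infinite) :
    (μ.prod μ) {p : G × G | p.1 * p.2 * p.1⁻¹ * p.2⁻¹ = g} = 0 := by
  change μ.prod μ (commutatorFiber g) = 0
  by_contra hm
  obtain ⟨n, hn⟩ := ENNReal.exists_nat_mul_gt hm ENNReal.one_ne_top
  obtain ⟨t, htg, rfl⟩ := hg.exists_subset_card_eq n
  obtain ⟨U, hU, hUd⟩ := t.finite_toSet.t2_separation
  have hsum := sum_measure_le_measure_biUnion_of_pairwiseDisjoint_isOpen (μ.prod μ)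
    (K := commutatorFiber) (U := fun c => (fun p : G × G => ⁅p.1, p.2⁆) ⁻¹' U c)
    (fun c _ => (isClosed_commutatorFiber c).isCompact)
    (fun c _ => (hU c).2.preimage continuous_commutatorElement)
    (fun c _ p (hp : ⁅p.1, p.2⁆ = c) => Set.mem_preimage.2 (hp ▸ (hU c).1))
    (fun c hc d hd hcd => (hUd hc hd hcd).preimage _)
  have heq : ∀ c ∈ t, μ.prod μ (commutatorFiber c) = μ.prod μ (commutatorFiber g) := by
    intro c hc
    obtain ⟨a, rfl⟩ := htg hc
    exact measure_commutatorFiber_conj μ a g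
  rw [Finset.sum_congr rfl heq, Finset.sum_const, nsmul_eq_mul] at hsum
  exact (hn.trans_le hsum).not_ge prob_le_one
end

section
/- Let G be a connected compact Hausdorff topological group and let g ∈ G be a non-central element. Then μ²(α⁻¹(g)) = 0. -/
/-!
For fixed `x`, the `y` with `⁅x, y⁆ = g` form either the empty set or a left coset of the
centralizer of `x`; this closed subgroup is proper since `g ≠ 1` forces `x` to be non-central, so
by Steinhaus' theorem and connectedness it is Haar-null. Hence every vertical section of the
closed fiber is null. As `G` need not be second countable, the fiber need not belong to the product
σ-algebra; instead, compactness and outer regularity cover it by measurable sets made of finitely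
many tubes whose sections have arbitrarily small measure, to which Tonelli applies.
-/

open MeasureTheory Set
open scoped commutatorElement ENNReal Pointwise

theorem Subgroup.measure_eq_zero_of_ne_top {G : Type*} [Group G] [TopologicalSpace G]
    [IsTopologicalGroup G] [LocallyCompactSpace G] [ConnectedSpace G] [MeasurableSpace G]
    [BorelSpace G] (μ : Measure G) [μ.IsHaarMeasure] [μ.InnerRegular]
    {H : Subgroup G} (hH : MeasurableSet (H : Set G)) (hne : H ≠ ⊤) : μ H = 0 := by
  by_contra hpos
  -- Steinhaus: `H / H ⊆ H` is a neighbourhood of `1`, so `H` is open, hence clopen.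
  have hnhds : (H : Set G) ∈ nhds 1 :=
    Filter.mem_of_superset (Measure.div_mem_nhds_one_of_haar_pos μ _ hH (pos_iff_ne_zero.2 hpos))
      (div_subset_iff.2 fun _ ha _ hb => H.div_mem ha hb)
  have hopen : IsOpen (H : Set G) := H.isOpen_of_mem_nhds hnhds
  exact hne <| Subgroup.coe_eq_univ.1 <|
    IsClopen.eq_univ ⟨H.isClosed_of_isOpen hopen, hopen⟩ ⟨1, H.one_mem⟩

theorem setOf_commutatorElement_eq_smul_centralizer {G : Type*} [Group G] {x y₀ g : G}
    (h₀ : ⁅x, y₀⁆ = g) :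
    {y | ⁅x, y⁆ = g} = y₀ • (Subgroup.centralizer {x} : Set G) := by
  subst h₀
  ext y
  obtain ⟨z, rfl⟩ : ∃ z, y = y₀ * z := ⟨y₀⁻¹ * y, by group⟩
  rw [← smul_eq_mul, smul_mem_smul_set_iff]
  simp only [mem_ofPred_eq, commutatorElement_def, smul_eq_mul, SetLike.mem_coe,
    Subgroup.mem_centralizer_singleton_iff, mul_inv_rev, mul_assoc, mul_right_inj]
  rw [← mul_assoc, ← mul_assoc, mul_left_inj, mul_inv_eq_iff_eq_mul]
  exact Commute.inv_right_iff

theorem measure_setOf_commutatorElement_eq_eq_zero {G : Type*} [Group G] [TopologicalSpace G]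
    [IsTopologicalGroup G] [LocallyCompactSpace G] [T2Space G] [ConnectedSpace G]
    [MeasurableSpace G] [BorelSpace G] (μ : Measure G) [μ.IsHaarMeasure] [μ.InnerRegular]
    {g : G} (hg : g ∉ Subgroup.center G) (x : G) : μ {y | ⁅x, y⁆ = g} = 0 := by
  rcases eq_empty_or_nonempty {y | ⁅x, y⁆ = g} with hempty | ⟨y₀, h₀⟩
  · simp [hempty]
  rw [setOf_commutatorElement_eq_smul_centralizer h₀, measure_smul]
  refine Subgroup.measure_eq_zero_of_ne_top μ (isClosed_centralizer _).measurableSet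
    fun htop => hg ?_
  rw [Subgroup.centralizer_eq_top_iff_subset, singleton_subset_iff] at htop
  rw [← h₀, commutatorElement_eq_one_iff_commute.2 (Subgroup.mem_center_iff.1 htop y₀).symm]
  exact Subgroup.one_mem _

theorem isOpen_setOf_preimage_mk_subset {X Y : Type*} [TopologicalSpace X] [TopologicalSpace Y]
    [CompactSpace Y] {S : Set (X × Y)} (hS : IsClosed S) {V : Set Y} (hV : IsOpen V) :
    IsOpen {x | Prod.mk x ⁻¹' S ⊆ V} := by
  have : {x | Prod.mk x ⁻¹' S ⊆ V} = (Prod.fst '' (S ∩ Prod.snd ⁻¹' Vᶜ))ᶜ := by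
    ext x; simp [subset_def]
  rw [this]
  exact (isClosedMap_fst_of_compactSpace _ <|
    hS.inter (hV.isClosed_compl.preimage continuous_snd)).isOpen_compl

section CompactProduct

variable {X Y : Type*} [TopologicalSpace X] [CompactSpace X] [MeasurableSpace X]
  [OpensMeasurableSpace X] [TopologicalSpace Y] [CompactSpace Y] [MeasurableSpace Y]
  [OpensMeasurableSpace Y] {ν : Measure Y} [ν.OuterRegular] {S : Set (X × Y)}

theorem IsClosed.exists_measurableSet_superset_measure_preimage_mk_lt (hS : IsClosed S)
    {ε : ℝ≥0∞} (hε : ∀ x, ν (Prod.mk x ⁻¹' S) < ε) :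
    ∃ T ⊇ S, MeasurableSet T ∧ ∀ x, ν (Prod.mk x ⁻¹' T) < ε := by
  choose V hSV hV hVε using fun x => (Prod.mk x ⁻¹' S).exists_isOpen_lt_of_lt ε (hε x)
  obtain ⟨t, ht⟩ := isCompact_univ.elim_finite_subcover (fun x => {x' | Prod.mk x' ⁻¹' S ⊆ V x})
    (fun x => isOpen_setOf_preimage_mk_subset hS (hV x)) fun x _ => mem_iUnion.2 ⟨x, hSV x⟩
  refine ⟨⋂ x ∈ t, {p | Prod.mk p.1 ⁻¹' S ⊆ V x → p.2 ∈ V x}, ?_, ?_, fun x' => ?_⟩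
  · exact fun p hp => mem_iInter₂.2 fun x _ hsub => hsub hp
  · refine Finset.measurableSet_biInter t fun x _ => MeasurableSet.imp ?_ ?_
    · exact (isOpen_setOf_preimage_mk_subset hS (hV x)).measurableSet.preimage measurable_fst
    · exact (hV x).measurableSet.preimage measurable_snd
  · obtain ⟨x, hxt, hx'⟩ := mem_iUnion₂.1 (ht (mem_univ x'))
    refine (measure_mono fun y hy => ?_).trans_lt (hVε x)
    exact mem_iInter₂.1 hy x hxt hx'

theorem IsClosed.measure_prod_eq_zero (hS : IsClosed S) (μ : Measure X)
    (hnull : ∀ x, ν (Prod.mk x ⁻¹' S) = 0) : μ.prod ν S = 0 := by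
  choose T hST hT hTlt using fun n : ℕ =>
    hS.exists_measurableSet_superset_measure_preimage_mk_lt (ε := (n : ℝ≥0∞)⁻¹) fun x => by
      rw [hnull x]; exact ENNReal.inv_pos.2 (ENNReal.natCast_ne_top n)
  refine measure_mono_null (subset_iInter hST) <|
    Measure.measure_prod_null_of_ae_null (.iInter hT) (ae_of_all _ fun x => ?_)
  refine nonpos_iff_eq_zero.1 (ge_of_tendsto' ENNReal.tendsto_inv_nat_nhds_zero fun n => ?_)
  exact (measure_mono (preimage_mono (iInter_subset _ n))).trans (hTlt n x).le

end CompactProduct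

theorem commutator_fiber_measure_zero_of_noncentral_general {G : Type*} [Group G]
    [TopologicalSpace G] [IsTopologicalGroup G] [CompactSpace G] [T2Space G]
    [ConnectedSpace G] [MeasurableSpace G] [BorelSpace G]
    (μ : Measure G) [μ.IsHaarMeasure]
    (g : G) (hg : g ∉ Subgroup.center G) :
    (μ.prod μ) {p : G × G | p.1 * p.2 * p.1⁻¹ * p.2⁻¹ = g} = 0 := by
  have hclosed : IsClosed {p : G × G | p.1 * p.2 * p.1⁻¹ * p.2⁻¹ = g} :=
    isClosed_eq (by fun_prop) continuous_const
  exact hclosed.measure_prod_eq_zero μ (measure_setOf_commutatorElement_eq_eq_zero μ hg)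

/-- For a connected compact Hausdorff topological group `G` with normalized Haar measure `μ`,
if `g ∈ G` is non-central then the fiber of the commutator map over `g` has
`μ × μ`-measure zero. -/
theorem commutator_fiber_measure_zero_of_noncentral {G : Type*} [Group G]
    [TopologicalSpace G] [IsTopologicalGroup G] [CompactSpace G] [T2Space G]
    [ConnectedSpace G] [MeasurableSpace G] [BorelSpace G]
    (μ : Measure G) [μ.IsHaarMeasure] [IsProbabilityMeasure μ]
    (g : G) (hg : g ∉ Subgroup.center G) :
    (μ.prod μ) {p : G × G | p.1 * p.2 * p.1⁻¹ * p.2⁻¹ = g} = 0 :=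
  commutator_fiber_measure_zero_of_noncentral_general μ g hg
end

section
/- Let n ≥ 2 and let ζ be an n-th root of unity with ζ ≠ 1. Then the set {a ∈ SU(n) : there exists b ∈ SU(n) with a b a⁻¹ b⁻¹ = ζ·I} has normalized Haar measure zero in SU(n). -/
/-!
If `a b a⁻¹ b⁻¹ = ζ • 1` with `ζ ≠ 1`, then `b a⁻¹ b⁻¹ = ζ • a⁻¹`, so `tr a⁻¹ = ζ tr a⁻¹` and
`tr a = 0`; it suffices to show that `{a | tr a = 0}` is Haar-null.

For a continuous path `t : ℝ → G`, Fubini and left invariance give `μ S ≤ μ T` as soon as, for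
every `a ∉ T`, only countably many `θ` have `t θ * a ∈ S`. Along `t θ = diag(e^{iθ}, e^{-iθ}, 1, …)`
the trace of `t θ * a` is a Laurent polynomial in `e^{iθ}` with leading coefficient `a₀₀`, so
`{tr = 0}` is no bigger than `{a₀₀ = 0}`. Rotations in the coordinate planes `(j, k)` likewise
show that requiring one more entry of the first column to vanish does not decrease the measure,
and a column of a unitary matrix cannot vanish entirely.
-/

open MeasureTheory

/-- The special unitary group `SU(n)`: the subgroup of the unitary group
`Matrix.unitaryGroup (Fin n) ℂ` consisting of matrices of determinant `1`. -/
def SU (n : ℕ) : Subgroup (Matrix.unitaryGroup (Fin n) ℂ) where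
  carrier := {A | (A : Matrix (Fin n) (Fin n) ℂ).det = 1}
  one_mem' := by simp
  mul_mem' := by
    intro a b ha hb
    simp only [Set.mem_setOf_eq, Submonoid.coe_mul, Matrix.det_mul] at *
    rw [ha, hb, mul_one]
  inv_mem' := by
    intro a ha
    simp only [Set.mem_setOf_eq] at *
    have : ((a⁻¹ : Matrix.unitaryGroup (Fin n) ℂ) : Matrix (Fin n) (Fin n) ℂ)
        = star (a : Matrix (Fin n) (Fin n) ℂ) := rfl
    rw [this]
    show Matrix.det (Matrix.conjTranspose (a : Matrix (Fin n) (Fin n) ℂ)) = 1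
    rw [Matrix.det_conjTranspose, ha, star_one]

noncomputable instance (n : ℕ) : MeasurableSpace (SU n) := borel (SU n)

instance (n : ℕ) : BorelSpace (SU n) := ⟨rfl⟩

section Slices

variable {G X : Type*} [Group G] [MeasurableSpace G] [MeasurableMul₂ G] [MeasurableSpace X]

theorem measure_le_of_countable_slices (μ : Measure G) [SFinite μ] [μ.IsMulLeftInvariant]
    (ν : Measure X) [IsProbabilityMeasure ν] [NullSingletonClass ν] {S T : Set G}
    (hS : MeasurableSet S) (hT : MeasurableSet T) {t : X → G} (ht : Measurable t)
    (hslice : ∀ a ∉ T, {x | t x * a ∈ S}.Countable) :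
    μ S ≤ μ T := by
  set W : Set (X × G) := {p | t p.1 * p.2 ∈ S}
  have hW : MeasurableSet W := hS.preimage ((ht.comp measurable_fst).mul measurable_snd)
  have h_fst : (ν.prod μ) W = μ S := by
    rw [Measure.prod_apply hW]
    have hfiber (x : X) : μ (Prod.mk x ⁻¹' W) = μ S := measure_preimage_mul μ (t x) S
    simp [hfiber]
  have h_snd : ∀ a, ν ((·, a) ⁻¹' W) ≤ T.indicator 1 a := by
    intro a
    by_cases ha : a ∈ T
    · simpa [ha] using prob_le_one
    · simp [ha, W, (hslice a ha).measure_zero ν]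
  calc μ S = (ν.prod μ) W := h_fst.symm
    _ = ∫⁻ a, ν ((·, a) ⁻¹' W) ∂μ := Measure.prod_apply_symm hW
    _ ≤ ∫⁻ a, T.indicator 1 a ∂μ := lintegral_mono h_snd
    _ = μ T := lintegral_indicator_one hT

variable [TopologicalSpace G] [BorelSpace G]

theorem measure_le_of_countable_slices_of_continuous (μ : Measure G) [SFinite μ]
    [μ.IsMulLeftInvariant] {S T : Set G} (hS : MeasurableSet S) (hT : MeasurableSet T)
    {t : ℝ → G} (ht : Continuous t) (hslice : ∀ a ∉ T, {θ : ℝ | t θ * a ∈ S}.Countable) :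
    μ S ≤ μ T :=
  measure_le_of_countable_slices μ (volume : Measure unitInterval) hS hT
    (ht.comp continuous_subtype_val).measurable
    fun a ha => (hslice a ha).preimage Subtype.val_injective

end Slices

namespace Matrix

section BlockEmbed

variable {ι κ R : Type*} [Fintype ι] [DecidableEq ι] [Fintype κ] [DecidableEq κ] [CommRing R]

/-- `M` acting on the coordinates `f k`, and as the identity on all other coordinates. -/
def blockEmbed (f : κ → ι) (M : Matrix κ κ R) : Matrix ι ι R :=
  1 + (1 : Matrix ι ι R).submatrix id f * (M - 1) * (1 : Matrix ι ι R).submatrix f id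

variable {f : κ → ι}

omit [Fintype κ] [DecidableEq κ] in
theorem one_submatrix_id_mul {m : Type*} (X : Matrix ι m R) :
    (1 : Matrix ι ι R).submatrix f id * X = X.submatrix f id := by
  ext; simp [mul_apply, one_apply]

omit [Fintype κ] [DecidableEq κ] in
theorem mul_one_submatrix_id {m : Type*} (X : Matrix m ι R) :
    X * (1 : Matrix ι ι R).submatrix id f = X.submatrix id f := by
  ext; simp [mul_apply, one_apply]

omit [Fintype κ] in
theorem one_submatrix_mul_one_submatrix (hf : Function.Injective f) :
    (1 : Matrix ι ι R).submatrix f id * (1 : Matrix ι ι R).submatrix id f = 1 := by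
  rw [one_submatrix_id_mul, submatrix_submatrix]
  exact submatrix_one f hf

theorem one_submatrix_mul_one_submatrix_mul (hf : Function.Injective f) {m : Type*}
    (X : Matrix κ m R) :
    (1 : Matrix ι ι R).submatrix f id * ((1 : Matrix ι ι R).submatrix id f * X) = X := by
  rw [← Matrix.mul_assoc, one_submatrix_mul_one_submatrix hf, Matrix.one_mul]

theorem blockEmbed_mul (hf : Function.Injective f) (M N : Matrix κ κ R) :
    blockEmbed f (M * N) = blockEmbed f M * blockEmbed f N := by
  have hMN : M * N - 1 = (M - 1) + (N - 1) + (M - 1) * (N - 1) := by noncomm_ring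
  simp only [blockEmbed, hMN, Matrix.mul_add, Matrix.add_mul, Matrix.mul_one, Matrix.one_mul,
    Matrix.mul_assoc, one_submatrix_mul_one_submatrix_mul hf]
  abel

omit [Fintype ι] in
theorem blockEmbed_one : blockEmbed f (1 : Matrix κ κ R) = 1 := by
  simp [blockEmbed]

omit [Fintype ι] in
theorem star_blockEmbed [StarRing R] (M : Matrix κ κ R) :
    star (blockEmbed f M) = blockEmbed f (star M) := by
  simp [blockEmbed, star_eq_conjTranspose, conjTranspose_submatrix, Matrix.mul_assoc]

theorem blockEmbed_mem_unitaryGroup [StarRing R] (hf : Function.Injective f)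
    {M : Matrix κ κ R} (hM : M ∈ unitaryGroup κ R) : blockEmbed f M ∈ unitaryGroup ι R := by
  rw [mem_unitaryGroup_iff, star_blockEmbed, ← blockEmbed_mul hf, mem_unitaryGroup_iff.mp hM,
    blockEmbed_one]

theorem det_blockEmbed (hf : Function.Injective f) (M : Matrix κ κ R) :
    (blockEmbed f M).det = M.det := by
  rw [blockEmbed, det_one_add_mul_comm, ← Matrix.mul_assoc, one_submatrix_mul_one_submatrix hf,
    Matrix.one_mul, add_sub_cancel]

omit [Fintype ι] in
theorem continuous_blockEmbed [TopologicalSpace R] [IsTopologicalRing R] :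
    Continuous (blockEmbed (R := R) f) := by
  unfold blockEmbed
  fun_prop

theorem blockEmbed_mul_submatrix (hf : Function.Injective f) (M : Matrix κ κ R)
    (A : Matrix ι ι R) : (blockEmbed f M * A).submatrix f id = M * A.submatrix f id := by
  rw [← one_submatrix_id_mul, ← one_submatrix_id_mul A, blockEmbed]
  simp only [Matrix.add_mul, Matrix.mul_add, Matrix.sub_mul, Matrix.one_mul, Matrix.mul_assoc,
    one_submatrix_mul_one_submatrix_mul hf]
  abel

theorem blockEmbed_mul_apply (hf : Function.Injective f) (M : Matrix κ κ R) (A : Matrix ι ι R)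
    (p : κ) (j : ι) : (blockEmbed f M * A) (f p) j = ∑ q, M p q * A (f q) j :=
  congrFun (congrFun (blockEmbed_mul_submatrix hf M A) p) j

theorem blockEmbed_mul_apply_of_notMem_range (M : Matrix κ κ R) (A : Matrix ι ι R)
    {i : ι} (hi : i ∉ Set.range f) (j : ι) : (blockEmbed f M * A) i j = A i j := by
  have hU (X : Matrix κ ι R) : ((1 : Matrix ι ι R).submatrix id f * X) i j = 0 := by
    simp [mul_apply, fun k => (Ne.symm fun h => hi ⟨k, h⟩ : i ≠ f k)]
  simp [blockEmbed, Matrix.add_mul, Matrix.mul_assoc, hU]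

theorem trace_blockEmbed_mul (M : Matrix κ κ R) (A : Matrix ι ι R) :
    (blockEmbed f M * A).trace = A.trace + ((M - 1) * A.submatrix f f).trace := by
  have hVAU : (1 : Matrix ι ι R).submatrix f id * A * (1 : Matrix ι ι R).submatrix id f =
      A.submatrix f f := by
    rw [one_submatrix_id_mul, mul_one_submatrix_id, submatrix_submatrix]
    rfl
  rw [blockEmbed, Matrix.add_mul, Matrix.one_mul, trace_add, ← hVAU]
  simp only [Matrix.mul_assoc]
  rw [trace_mul_comm ((1 : Matrix ι ι R).submatrix id f)]
  simp only [Matrix.mul_assoc]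

end BlockEmbed

end Matrix

section Countable

open Complex Polynomial

theorem countable_setOf_isRoot_exp_mul_I {p : ℂ[X]} (hp : p ≠ 0) :
    {θ : ℝ | p.IsRoot (exp (θ * I))}.Countable :=
  (finite_setOfPred_isRoot hp).countable.preimage_cexp.preimage
    ((mul_left_injective₀ I_ne_zero).comp ofReal_injective)

theorem countable_setOf_mul_exp_add_mul_exp_neg_add_eq_zero {A B C : ℂ} (h : A ≠ 0 ∨ B ≠ 0) :
    {θ : ℝ | A * exp (θ * I) + B * exp (-(θ * I)) + C = 0}.Countable := by
  set p : ℂ[X] := Polynomial.C A * X ^ 2 + Polynomial.C C * X + Polynomial.C B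
  have hp : p ≠ 0 := by
    intro hp0
    have h2 : p.coeff 2 = A := by simp [p]
    have h0 : p.coeff 0 = B := by simp [p]
    simp [hp0] at h2 h0
    tauto
  refine (countable_setOf_isRoot_exp_mul_I hp).mono fun θ hθ => ?_
  have hu : exp (θ * I) * exp (-(θ * I)) = 1 := by rw [← exp_add, add_neg_cancel, exp_zero]
  simp only [Set.mem_ofPred_eq, IsRoot, p, eval_add, eval_mul, eval_C, eval_pow, eval_X] at hθ ⊢
  linear_combination exp (θ * I) * hθ - B * hu

theorem countable_setOf_cos_mul_sub_sin_mul_eq_zero {x y : ℂ} (h : x ≠ 0 ∨ y ≠ 0) :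
    {θ : ℝ | (Real.cos θ : ℂ) * x - (Real.sin θ : ℂ) * y = 0}.Countable := by
  have hxy : (x + I * y) / 2 ≠ 0 ∨ (x - I * y) / 2 ≠ 0 := by
    by_contra! h0
    have hx : x = 0 := by linear_combination h0.1 + h0.2
    have hy : y = 0 := by linear_combination (-I) * (h0.1 - h0.2) + y * I_sq
    tauto
  refine (countable_setOf_mul_exp_add_mul_exp_neg_add_eq_zero (C := 0) hxy).mono fun θ hθ => ?_
  simp only [Set.mem_ofPred_eq, exp_mul_I, ← neg_mul, cos_neg, sin_neg, ← ofReal_cos,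
    ← ofReal_sin] at hθ ⊢
  linear_combination hθ + (y * Real.sin θ) * I_sq

end Countable

section PlanePaths

open Complex Matrix

noncomputable def planeRotation (θ : ℝ) : Matrix (Fin 2) (Fin 2) ℂ :=
  !![(Real.cos θ : ℂ), -(Real.sin θ : ℂ); (Real.sin θ : ℂ), (Real.cos θ : ℂ)]

noncomputable def planePhase (θ : ℝ) : Matrix (Fin 2) (Fin 2) ℂ :=
  !![exp (θ * I), 0; 0, exp (-(θ * I))]

theorem planeRotation_mem_specialUnitaryGroup (θ : ℝ) :
    planeRotation θ ∈ specialUnitaryGroup (Fin 2) ℂ := by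
  have hcs : (Real.cos θ : ℂ) ^ 2 + (Real.sin θ : ℂ) ^ 2 = 1 := by
    exact_mod_cast Real.cos_sq_add_sin_sq θ
  refine mem_specialUnitaryGroup_iff.mpr ⟨mem_unitaryGroup_iff.mpr ?_, ?_⟩
  · ext i j
    fin_cases i <;> fin_cases j <;>
      simp [planeRotation, mul_apply, Fin.sum_univ_two, star_eq_conjTranspose] <;>
      simp only [← ofReal_cos, ← ofReal_sin, conj_ofReal] <;>
      first | linear_combination hcs | ring
  · rw [planeRotation, det_fin_two_of]
    linear_combination hcs

theorem planePhase_mem_specialUnitaryGroup (θ : ℝ) :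
    planePhase θ ∈ specialUnitaryGroup (Fin 2) ℂ := by
  have hu : exp (θ * I) * exp (-(θ * I)) = 1 := by rw [← exp_add, add_neg_cancel, exp_zero]
  refine mem_specialUnitaryGroup_iff.mpr ⟨mem_unitaryGroup_iff.mpr ?_, ?_⟩
  · ext i j
    fin_cases i <;> fin_cases j <;>
      simp [planePhase, mul_apply, Fin.sum_univ_two, star_eq_conjTranspose, ← exp_conj, ← exp_add]
  · rw [planePhase, det_fin_two_of, hu]
    ring

theorem continuous_planeRotation : Continuous planeRotation := by
  unfold planeRotation
  fun_prop

theorem continuous_planePhase : Continuous planePhase := by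
  unfold planePhase
  fun_prop

end PlanePaths

namespace SU

open Matrix

variable {n : ℕ}

def toMatrix (a : SU n) : Matrix (Fin n) (Fin n) ℂ :=
  ((a : unitaryGroup (Fin n) ℂ) : Matrix (Fin n) (Fin n) ℂ)

theorem toMatrix_mul (a b : SU n) : toMatrix (a * b) = toMatrix a * toMatrix b := rfl

theorem toMatrix_one : toMatrix (1 : SU n) = 1 := rfl

theorem toMatrix_inv (a : SU n) : toMatrix a⁻¹ = star (toMatrix a) := rfl

theorem isInducing_toMatrix : Topology.IsInducing (toMatrix (n := n)) :=
  Topology.IsInducing.subtypeVal.comp Topology.IsInducing.subtypeVal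

theorem continuous_toMatrix : Continuous (toMatrix (n := n)) :=
  isInducing_toMatrix.continuous

instance : SecondCountableTopology (SU n) :=
  have : SecondCountableTopology (Matrix (Fin n) (Fin n) ℂ) :=
    inferInstanceAs (SecondCountableTopology (Fin n → Fin n → ℂ))
  isInducing_toMatrix.secondCountableTopology

theorem trace_eq_zero_of_commutator_eq_smul_one {ζ : ℂ} (hζ : ζ ≠ 1) {a b : SU n}
    (h : toMatrix (a * b * a⁻¹ * b⁻¹) = ζ • 1) : (toMatrix a).trace = 0 := by
  have hconj : toMatrix b * toMatrix a⁻¹ * toMatrix b⁻¹ = ζ • toMatrix a⁻¹ := by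
    rw [← toMatrix_mul, ← toMatrix_mul, show b * a⁻¹ * b⁻¹ = a⁻¹ * (a * b * a⁻¹ * b⁻¹) by group,
      toMatrix_mul, h, Matrix.mul_smul, Matrix.mul_one]
  have htrace : (toMatrix a⁻¹).trace = ζ * (toMatrix a⁻¹).trace := by
    rw [← smul_eq_mul, ← trace_smul, ← hconj, trace_mul_cycle, ← toMatrix_mul, inv_mul_cancel,
      toMatrix_one, Matrix.one_mul]
  have hinv : (toMatrix a⁻¹).trace = 0 := by
    have h1ζ : (1 - ζ) * (toMatrix a⁻¹).trace = 0 := by linear_combination htrace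
    exact (mul_eq_zero.mp h1ζ).resolve_left (sub_ne_zero.mpr hζ.symm)
  rwa [toMatrix_inv, star_eq_conjTranspose, trace_conjTranspose, star_eq_zero] at hinv

section BlockEmbed

variable {κ : Type*} [Fintype κ] [DecidableEq κ] {f : κ → Fin n}

def blockEmbed (hf : Function.Injective f) {M : Matrix κ κ ℂ}
    (hM : M ∈ specialUnitaryGroup κ ℂ) : SU n :=
  ⟨⟨Matrix.blockEmbed f M, blockEmbed_mem_unitaryGroup hf (mem_specialUnitaryGroup_iff.mp hM).1⟩,
    (det_blockEmbed hf M).trans (mem_specialUnitaryGroup_iff.mp hM).2⟩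

theorem toMatrix_blockEmbed_mul (hf : Function.Injective f) {M : Matrix κ κ ℂ}
    (hM : M ∈ specialUnitaryGroup κ ℂ) (a : SU n) :
    toMatrix (blockEmbed hf hM * a) = Matrix.blockEmbed f M * toMatrix a :=
  rfl

theorem continuous_blockEmbed (hf : Function.Injective f) {M : ℝ → Matrix κ κ ℂ}
    (hMc : Continuous M) (hM : ∀ θ, M θ ∈ specialUnitaryGroup κ ℂ) :
    Continuous fun θ => blockEmbed hf (hM θ) :=
  ((Matrix.continuous_blockEmbed.comp hMc).subtype_mk _).subtype_mk _

end BlockEmbed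

def colVanishing (s : Finset (Fin n)) (l : Fin n) : Set (SU n) :=
  {a | ∀ j ∈ s, toMatrix a j l = 0}

theorem isClosed_colVanishing (s : Finset (Fin n)) (l : Fin n) : IsClosed (colVanishing s l) := by
  simp only [colVanishing, Set.ofPred_forall]
  exact isClosed_biInter fun j _ =>
    isClosed_eq (continuous_toMatrix.matrix_elem j l) continuous_const

theorem colVanishing_univ (l : Fin n) : colVanishing Finset.univ l = ∅ := by
  refine Set.eq_empty_of_forall_notMem fun a ha => ?_
  have hunit : star (toMatrix a) * toMatrix a = 1 := UnitaryGroup.star_mul_self _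
  have hll := congrFun (congrFun hunit l) l
  simp [mul_apply, fun j => ha j (Finset.mem_univ j)] at hll

section Measure

variable (μ : Measure (SU n)) [SFinite μ] [μ.IsMulLeftInvariant]

theorem measure_colVanishing_le_insert {s : Finset (Fin n)} {j k : Fin n} (hj : j ∈ s)
    (hk : k ∉ s) (l : Fin n) : μ (colVanishing s l) ≤ μ (colVanishing (insert k s) l) := by
  have hf := injective_pair_iff_ne.mpr (ne_of_mem_of_not_mem hj hk)
  refine measure_le_of_countable_slices_of_continuous μ
    (isClosed_colVanishing _ _).measurableSet (isClosed_colVanishing _ _).measurableSet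
    (continuous_blockEmbed hf continuous_planeRotation planeRotation_mem_specialUnitaryGroup)
    fun a ha => ?_
  by_cases hrest : ∃ m ∈ s, m ≠ j ∧ toMatrix a m l ≠ 0
  · obtain ⟨m, hm, hmj, ham⟩ := hrest
    have hmf : m ∉ Set.range ![j, k] := by
      rintro ⟨p, rfl⟩
      fin_cases p <;> simp_all
    refine Set.countable_empty.mono fun θ hθ => ham ?_
    rw [← hθ m hm, toMatrix_blockEmbed_mul, blockEmbed_mul_apply_of_notMem_range _ _ hmf]
  · have hjk : toMatrix a j l ≠ 0 ∨ toMatrix a k l ≠ 0 := by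
      by_contra! h0
      refine ha fun m hm => ?_
      rcases Finset.mem_insert.mp hm with rfl | hm
      · exact h0.2
      · by_cases hmj : m = j
        · exact hmj ▸ h0.1
        · exact not_not.mp fun hne => hrest ⟨m, hm, hmj, hne⟩
    refine (countable_setOf_cos_mul_sub_sin_mul_eq_zero hjk).mono fun θ hθ => ?_
    have hj0 : (Matrix.blockEmbed ![j, k] (planeRotation θ) * toMatrix a) j l = 0 := hθ j hj
    have hrow := blockEmbed_mul_apply hf (planeRotation θ) (toMatrix a) 0 l
    rw [Matrix.cons_val_zero, hj0] at hrow
    simp [Fin.sum_univ_two, planeRotation] at hrow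
    simp only [Set.mem_ofPred_eq, Complex.ofReal_cos, Complex.ofReal_sin]
    linear_combination -hrow

theorem measure_colVanishing_le_union {s : Finset (Fin n)} (hs : s.Nonempty) (t : Finset (Fin n))
    (l : Fin n) : μ (colVanishing s l) ≤ μ (colVanishing (s ∪ t) l) := by
  induction t using Finset.induction_on with
  | empty => simp
  | insert k t _ ih =>
    rw [Finset.union_insert]
    by_cases hk : k ∈ s ∪ t
    · rwa [Finset.insert_eq_of_mem hk]
    · obtain ⟨j, hj⟩ := hs
      exact ih.trans (measure_colVanishing_le_insert μ (Finset.mem_union_left t hj) hk l)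

theorem measure_colVanishing_singleton (j l : Fin n) : μ (colVanishing {j} l) = 0 := by
  simpa [colVanishing_univ] using
    measure_colVanishing_le_union μ (Finset.singleton_nonempty j) Finset.univ l

theorem measure_setOf_trace_eq_zero_le {i j : Fin n} (hij : i ≠ j) :
    μ {a | (toMatrix a).trace = 0} ≤ μ (colVanishing {i} i) := by
  have hf := injective_pair_iff_ne.mpr hij
  refine measure_le_of_countable_slices_of_continuous μ
    (isClosed_eq continuous_toMatrix.matrix_trace continuous_const).measurableSet
    (isClosed_colVanishing _ _).measurableSet
    (continuous_blockEmbed hf continuous_planePhase planePhase_mem_specialUnitaryGroup)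
    fun a ha => ?_
  have hii : toMatrix a i i ≠ 0 := fun h => ha (by simpa [colVanishing] using h)
  refine (countable_setOf_mul_exp_add_mul_exp_neg_add_eq_zero (B := toMatrix a j j)
    (C := (toMatrix a).trace - toMatrix a i i - toMatrix a j j) (Or.inl hii)).mono fun θ hθ => ?_
  simp only [Set.mem_ofPred_eq, toMatrix_blockEmbed_mul, trace_blockEmbed_mul] at hθ ⊢
  rw [trace_fin_two, mul_apply, mul_apply, Fin.sum_univ_two, Fin.sum_univ_two] at hθ
  simp [planePhase] at hθ
  linear_combination hθ

theorem measure_setOf_trace_eq_zero (hn : 2 ≤ n) : μ {a | (toMatrix a).trace = 0} = 0 :=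
  nonpos_iff_eq_zero.mp <| (measure_setOf_trace_eq_zero_le μ (i := ⟨0, by omega⟩)
    (j := ⟨1, by omega⟩) (by simp)).trans_eq (measure_colVanishing_singleton μ _ _)

end Measure

end SU

theorem SU_measure_zero_of_commutator_eq_scalar_general (n : ℕ) (hn : 2 ≤ n)
    (ζ : ℂ) (hζ : ζ ≠ 1)
    (μ : Measure (SU n)) [μ.IsHaarMeasure] [IsProbabilityMeasure μ] :
    μ {a : SU n | ∃ b : SU n,
        ((↑(↑(a * b * a⁻¹ * b⁻¹) : Matrix.unitaryGroup (Fin n) ℂ)) :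
          Matrix (Fin n) (Fin n) ℂ) = ζ • (1 : Matrix (Fin n) (Fin n) ℂ)} = 0 :=
  measure_mono_null (fun _ ⟨_, hb⟩ => SU.trace_eq_zero_of_commutator_eq_smul_one hζ hb)
    (SU.measure_setOf_trace_eq_zero μ hn)

/-- For `n ≥ 2` and an `n`-th root of unity `ζ ≠ 1`, the set of `a ∈ SU(n)` for which there is
some `b ∈ SU(n)` with `a b a⁻¹ b⁻¹ = ζ·I` has normalized Haar measure zero in `SU(n)`. -/
theorem SU_measure_zero_of_commutator_eq_scalar (n : ℕ) (hn : 2 ≤ n)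
    (ζ : ℂ) (hζn : ζ ^ n = 1) (hζ : ζ ≠ 1)
    (μ : Measure (SU n)) [μ.IsHaarMeasure] [IsProbabilityMeasure μ] :
    μ {a : SU n | ∃ b : SU n,
        ((↑(↑(a * b * a⁻¹ * b⁻¹) : Matrix.unitaryGroup (Fin n) ℂ)) :
          Matrix (Fin n) (Fin n) ℂ) = ζ • (1 : Matrix (Fin n) (Fin n) ℂ)} = 0 :=
  SU_measure_zero_of_commutator_eq_scalar_general n hn ζ hζ μ
end

section
/- Let G be a non-abelian connected compact Lie group and let g ∈ G be a central element. Then μ²(α⁻¹(g)) = 0. -/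
/-!
For fixed `x`, the solutions `y` of `x y x⁻¹ y⁻¹ = g` form either the empty set or a left coset
of the centralizer of `x`. If `x` is not central, that centralizer is a proper closed subgroup;
by Steinhaus' theorem a closed subgroup of positive Haar measure is open, hence everything in a
connected group, so the slice is null. The centre itself is a proper closed subgroup, hence
null, and Fubini finishes the argument.
-/

open MeasureTheory

open Pointwise in
theorem Subgroup.measure_eq_zero_of_isClosed_of_ne_top {G : Type*} [Group G]
    [TopologicalSpace G] [IsTopologicalGroup G] [LocallyCompactSpace G] [ConnectedSpace G]
    [MeasurableSpace G] [BorelSpace G] (μ : Measure G) [μ.IsHaarMeasure] [μ.InnerRegular]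
    {K : Subgroup G} (hK : IsClosed (K : Set G)) (hne : K ≠ ⊤) : μ K = 0 := by
  by_contra hpos
  have hdiv : (K : Set G) / K ∈ nhds (1 : G) :=
    Measure.div_mem_nhds_one_of_haar_pos μ K hK.measurableSet (pos_iff_ne_zero.2 hpos)
  have hopen : IsOpen (K : Set G) := K.isOpen_of_mem_nhds <|
    Filter.mem_of_superset hdiv <| by rintro _ ⟨a, ha, b, hb, rfl⟩; exact K.div_mem ha hb
  exact hne <| Subgroup.coe_eq_univ.1 <| IsClopen.eq_univ ⟨hK, hopen⟩ ⟨1, K.one_mem⟩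

open Pointwise in
theorem commutator_fiber_slice_subset_smul_centralizer {G : Type*} [Group G] {x y₀ g : G}
    (hy₀ : x * y₀ * x⁻¹ * y₀⁻¹ = g) :
    {y | x * y * x⁻¹ * y⁻¹ = g} ⊆ y₀ • (Subgroup.centralizer {x} : Set G) := by
  intro y hy
  have hconj : x * y * x⁻¹ = g * y := by rw [← hy]; group
  have hconj₀ : x * y₀ * x⁻¹ = g * y₀ := by rw [← hy₀]; group
  have hfix : x * (y₀⁻¹ * y) * x⁻¹ = y₀⁻¹ * y := calc
    _ = (x * y₀ * x⁻¹)⁻¹ * (x * y * x⁻¹) := by group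
    _ = y₀⁻¹ * y := by rw [hconj, hconj₀]; group
  rw [mem_leftCoset_iff, SetLike.mem_coe, Subgroup.mem_centralizer_singleton_iff]
  exact (mul_inv_eq_iff_eq_mul.1 hfix).symm

section HaarMeasure

variable {G : Type*} [Group G] [TopologicalSpace G] [IsTopologicalGroup G] [T2Space G]
  [LocallyCompactSpace G] [ConnectedSpace G] [MeasurableSpace G] [BorelSpace G]
  (μ : Measure G) [μ.IsHaarMeasure] [μ.InnerRegular]

theorem measure_center_eq_zero (hG : ∃ x y : G, x * y ≠ y * x) :
    μ (Subgroup.center G) = 0 := by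
  refine Subgroup.measure_eq_zero_of_isClosed_of_ne_top μ ?_ ?_
  · rw [← Subgroup.centralizer_univ]
    exact Set.isClosed_centralizer _
  · obtain ⟨x, y, hxy⟩ := hG
    intro htop
    exact hxy (Subgroup.mem_center_iff.1 (htop ▸ Subgroup.mem_top y) x)

theorem measure_commutator_fiber_slice_eq_zero {x : G} (hx : x ∉ Subgroup.center G) (g : G) :
    μ {y | x * y * x⁻¹ * y⁻¹ = g} = 0 := by
  rcases Set.eq_empty_or_nonempty {y | x * y * x⁻¹ * y⁻¹ = g} with hempty | ⟨y₀, hy₀⟩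
  · rw [hempty, measure_empty]
  refine measure_mono_null (commutator_fiber_slice_subset_smul_centralizer hy₀) ?_
  rw [measure_smul]
  refine Subgroup.measure_eq_zero_of_isClosed_of_ne_top μ (Set.isClosed_centralizer _) ?_
  rwa [Ne, Subgroup.centralizer_eq_top_iff_subset, Set.singleton_subset_iff]

theorem measure_commutator_fiber_eq_zero [SecondCountableTopology G]
    (hG : ∃ x y : G, x * y ≠ y * x) (g : G) :
    (μ.prod μ) {p : G × G | p.1 * p.2 * p.1⁻¹ * p.2⁻¹ = g} = 0 := by
  have hclosed : IsClosed {p : G × G | p.1 * p.2 * p.1⁻¹ * p.2⁻¹ = g} :=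
    isClosed_eq (by fun_prop) continuous_const
  rw [Measure.prod_apply hclosed.measurableSet,
    lintegral_eq_zero_iff' (measurable_measure_prodMk_left hclosed.measurableSet).aemeasurable]
  filter_upwards [measure_eq_zero_iff_ae_notMem.1 (measure_center_eq_zero μ hG)] with x hx
  exact measure_commutator_fiber_slice_eq_zero μ hx g

end HaarMeasure

theorem commutator_fiber_central_measure_zero_of_compact_lie_general
    {E : Type*} [NormedAddCommGroup E] [NormedSpace ℝ E] [FiniteDimensional ℝ E]
    {H : Type*} [TopologicalSpace H] (I : ModelWithCorners ℝ E H)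
    {G : Type*} [Group G] [TopologicalSpace G] [ChartedSpace H G] [LieGroup I (⊤ : ℕ∞) G]
    [CompactSpace G] [ConnectedSpace G] [T2Space G]
    [MeasurableSpace G] [BorelSpace G]
    (hG : ∃ x y : G, x * y ≠ y * x)
    (μ : Measure G) [μ.IsHaarMeasure]
    (g : G) :
    (μ.prod μ) {p : G × G | p.1 * p.2 * p.1⁻¹ * p.2⁻¹ = g} = 0 := by
  have : IsTopologicalGroup G := topologicalGroup_of_lieGroup I (⊤ : ℕ∞)
  have : SecondCountableTopology H := I.secondCountableTopology
  have : SecondCountableTopology G := ChartedSpace.secondCountable_of_sigmaCompact H G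
  exact measure_commutator_fiber_eq_zero μ hG g

/-- For a non-abelian connected compact Lie group `G` with normalized Haar measure `μ` and a
central element `g ∈ G`, the fiber of the commutator map over `g` has `μ × μ`-measure zero. -/
theorem commutator_fiber_central_measure_zero_of_compact_lie
    {E : Type*} [NormedAddCommGroup E] [NormedSpace ℝ E] [FiniteDimensional ℝ E]
    {H : Type*} [TopologicalSpace H] (I : ModelWithCorners ℝ E H)
    {G : Type*} [Group G] [TopologicalSpace G] [ChartedSpace H G] [LieGroup I (⊤ : ℕ∞) G]
    [CompactSpace G] [ConnectedSpace G] [T2Space G]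
    [MeasurableSpace G] [BorelSpace G]
    (hG : ∃ x y : G, x * y ≠ y * x)
    (μ : Measure G) [μ.IsHaarMeasure] [IsProbabilityMeasure μ]
    (g : G) (hg : g ∈ Subgroup.center G) :
    (μ.prod μ) {p : G × G | p.1 * p.2 * p.1⁻¹ * p.2⁻¹ = g} = 0 :=
  commutator_fiber_central_measure_zero_of_compact_lie_general I hG μ g
end

section
/- Let H be a compact Hausdorff topological group, N a finite central subgroup of H, G = H/N the quotient topological group with quotient homomorphism q : H → G, and let ν and μ be the normalized Haar measures on H and G respectively. Then for every g ∈ G and every h₀ ∈ H with q(h₀) = g, one has μ²(α_G⁻¹(g)) = Σ_{n ∈ N} ν²(α_H⁻¹(h₀·n)), where α_G and α_H denote the commutator maps of G and H. -/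
/-!
Pulling back along `q × q`, the fibre of the commutator map of `H ⧸ N` over `g = q h₀` is the
disjoint union of the fibres of the commutator map of `H` over the points `h₀ n`, `n ∈ N`. These
fibres need not be measurable for the product σ-algebra, so both sides are outer measures, and two
facts turn the set identity into the identity of measures. The fibres are disjoint compact sets,
so finite unions of open rectangles separate them by measurable sets, on which outer measure is
additive. And `q` has a measurable section (glued from finitely many translates of a neighbourhood
of `1` meeting `N` only in `1`), so that the pushforward `(q × q)_* ν²` gives every set,
measurable or not, the outer measure of its preimage.
-/

open MeasureTheory Set Topology Function
open scoped Pointwise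

section Measure

variable {α β : Type*} [MeasurableSpace α]

theorem MeasureTheory.measure_iUnion_of_disjoint_measurable_supersets {ι : Type*} [Countable ι]
    (μ : Measure α) {s E : ι → Set α} (hE : ∀ i, MeasurableSet (E i))
    (hd : Pairwise (Disjoint on E)) (hsE : ∀ i, s i ⊆ E i) :
    μ (⋃ i, s i) = ∑' i, μ (s i) := by
  have hpiece : ∀ i, (⋃ j, s j) ∩ E i = s i := fun i =>
    Subset.antisymm
      (fun x ⟨hx, hxE⟩ => by
        obtain ⟨j, hj⟩ := mem_iUnion.mp hx
        obtain rfl : j = i := by_contra fun hji => (hd hji).le_bot ⟨hsE j hj, hxE⟩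
        exact hj)
      (subset_inter (subset_iUnion s i) (hsE i))
  calc μ (⋃ i, s i) = μ.restrict (⋃ i, E i) (⋃ i, s i) := by
        rw [Measure.restrict_apply' (MeasurableSet.iUnion hE),
          inter_eq_left.mpr (iUnion_mono hsE)]
    _ = ∑' i, μ (s i) := by
        simp_rw [Measure.restrict_iUnion hd hE, Measure.sum_apply_of_countable,
          Measure.restrict_apply' (hE _), hpiece]

theorem MeasureTheory.Measure.map_apply_of_rightInverse [MeasurableSpace β] {f : α → β}
    {s : β → α} (hf : Measurable f) (hs : Measurable s) (hfs : RightInverse s f)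
    (hsat : ∀ U, MeasurableSet U → MeasurableSet (f ⁻¹' (f '' U))) (μ : Measure α)
    (S : Set β) :
    μ.map f S = μ (f ⁻¹' S) := by
  refine le_antisymm ?_ (Measure.le_map_apply hf.aemeasurable S)
  set U := toMeasurable μ (f ⁻¹' S)
  -- the largest set whose preimage lies in `U`; it is measurable because `s` is a section
  set T := (f '' Uᶜ)ᶜ
  have hT : MeasurableSet T := by
    have hsT : s ⁻¹' (f ⁻¹' T) = T := by rw [← preimage_comp, hfs.comp_eq_id, preimage_id]
    rw [← hsT, preimage_compl]
    exact hs (hsat _ (measurableSet_toMeasurable μ _).compl).compl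
  calc μ.map f S ≤ μ.map f T :=
        measure_mono fun x hx ⟨a, ha, hax⟩ =>
          ha (subset_toMeasurable μ _ (hax ▸ hx : f a ∈ S))
    _ = μ (f ⁻¹' T) := Measure.map_apply hf hT
    _ ≤ μ U := measure_mono fun a ha => not_not.mp fun haU => ha ⟨a, haU, rfl⟩
    _ = μ (f ⁻¹' S) := measure_toMeasurable _

theorem exists_measurableSet_injOn_image_eq {f : α → β}
    (hsat : ∀ U, MeasurableSet U → MeasurableSet (f ⁻¹' (f '' U))) {ι : Type*}
    (t : Finset ι) {A : ι → Set α} (hA : ∀ i, MeasurableSet (A i)) (hinj : ∀ i, InjOn f (A i)) :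
    ∃ D, MeasurableSet D ∧ InjOn f D ∧ f '' D = f '' ⋃ i ∈ t, A i := by
  classical
  induction t using Finset.induction_on with
  | empty => exact ⟨∅, .empty, injOn_empty f, by simp⟩
  | insert i t _ ih =>
    obtain ⟨D, hD, hDinj, hDim⟩ := ih
    -- add the points of `A i` whose fibre `D` does not meet yet
    refine ⟨D ∪ (A i \ f ⁻¹' (f '' D)), hD.union ((hA i).diff (hsat D hD)), ?_, ?_⟩
    · refine (injOn_union (disjoint_sdiff_right.mono_left (subset_preimage_image f D))).mpr
        ⟨hDinj, (hinj i).mono sdiff_subset, ?_⟩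
      rintro x hx y ⟨-, hy⟩ hxy
      exact hy ⟨x, hx, hxy⟩
    · rw [image_union, image_sdiff_preimage, union_sdiff_self, Finset.set_biUnion_insert,
        image_union, hDim, union_comm]

end Measure

theorem IsCompact.exists_measurableSet_prod_between {X Y : Type*} [TopologicalSpace X]
    [TopologicalSpace Y] [MeasurableSpace X] [MeasurableSpace Y] [OpensMeasurableSpace X]
    [OpensMeasurableSpace Y] {K O : Set (X × Y)} (hK : IsCompact K) (hO : IsOpen O)
    (hKO : K ⊆ O) : ∃ E, MeasurableSet E ∧ K ⊆ E ∧ E ⊆ O := by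
  refine hK.induction_on (p := fun s => ∃ E, MeasurableSet E ∧ s ⊆ E ∧ E ⊆ O)
    ⟨∅, .empty, empty_subset _, empty_subset _⟩
    (fun s t hst ⟨E, hE, htE, hEO⟩ => ⟨E, hE, hst.trans htE, hEO⟩)
    (fun s t ⟨E, hE, hsE, hEO⟩ ⟨F, hF, htF, hFO⟩ =>
      ⟨E ∪ F, hE.union hF, union_subset_union hsE htF, union_subset hEO hFO⟩)
    fun p hp => ?_
  obtain ⟨u, v, hu, hpu, hv, hpv, huvO⟩ := mem_nhds_prod_iff'.mp (hO.mem_nhds (hKO hp))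
  exact ⟨u ×ˢ v, mem_nhdsWithin_of_mem_nhds (prod_mem_nhds (hu.mem_nhds hpu) (hv.mem_nhds hpv)),
    u ×ˢ v, hu.measurableSet.prod hv.measurableSet, subset_rfl, huvO⟩

theorem MeasureTheory.measure_iUnion_of_isCompact_prod {X Y ι : Type*} [TopologicalSpace X]
    [TopologicalSpace Y] [MeasurableSpace X] [MeasurableSpace Y] [OpensMeasurableSpace X]
    [OpensMeasurableSpace Y] [T2Space X] [T2Space Y] [Finite ι] (ρ : Measure (X × Y))
    {K : ι → Set (X × Y)} (hK : ∀ i, IsCompact (K i)) (hd : Pairwise (Disjoint on K)) :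
    ρ (⋃ i, K i) = ∑' i, ρ (K i) := by
  have hO : ∀ i, IsOpen (⋃ (j) (_ : j ≠ i), K j)ᶜ := fun i =>
    (isClosed_iUnion_of_finite fun j =>
      isClosed_iUnion_of_finite fun _ => (hK j).isClosed).isOpen_compl
  have hKO : ∀ i, K i ⊆ (⋃ (j) (_ : j ≠ i), K j)ᶜ := fun i =>
    subset_compl_comm.mp <| iUnion₂_subset fun j hji => (hd hji).subset_compl_right
  choose E hE hKE hEO using fun i => (hK i).exists_measurableSet_prod_between (hO i) (hKO i)
  -- `E j` misses `K i` for `j ≠ i`, so removing the other `E j` keeps `K i`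
  refine measure_iUnion_of_disjoint_measurable_supersets ρ
    (E := fun i => E i \ ⋃ (j) (_ : j ≠ i), E j)
    (fun i => (hE i).diff (.iUnion fun j => .iUnion fun _ => hE j)) ?_ fun i => ?_
  · refine fun i j hij => disjoint_left.mpr fun p hpi hpj => hpj.2 ?_
    exact mem_biUnion hij hpi.1
  · refine fun p hp => ⟨hKE i hp, ?_⟩
    simp only [mem_iUnion, not_exists]
    exact fun j hji hpj => hEO j hpj (mem_biUnion (Ne.symm hji) hp)

namespace QuotientGroup

section Measurable
variable {H : Type*} [Group H] [MeasurableSpace H] [MeasurableMul H] (N : Subgroup H) [Countable N]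

theorem measurableSet_preimage_image_mk {U : Set H} (hU : MeasurableSet U) :
    MeasurableSet ((mk : H → H ⧸ N) ⁻¹' (mk '' U)) := by
  rw [preimage_image_mk]
  exact .iUnion fun n => measurable_mul_const _ hU

theorem measurableSet_image_mk {U : Set H} (hU : MeasurableSet U) :
    MeasurableSet ((mk : H → H ⧸ N) '' U) :=
  measurableSet_preimage_image_mk N hU

theorem measurableSet_preimage_image_prodMap_mk {U : Set (H × H)} (hU : MeasurableSet U) :
    MeasurableSet (Prod.map (mk : H → H ⧸ N) (mk : H → H ⧸ N) ⁻¹'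
      (Prod.map (mk : H → H ⧸ N) (mk : H → H ⧸ N) '' U)) := by
  have hsat : Prod.map (mk : H → H ⧸ N) (mk : H → H ⧸ N) ⁻¹'
      (Prod.map (mk : H → H ⧸ N) (mk : H → H ⧸ N) '' U) =
      ⋃ (n : N) (m : N), (fun p : H × H => (p.1 * n, p.2 * m)) ⁻¹' U := by
    ext p
    simp only [mem_preimage, mem_image, Prod.exists, Prod.map, Prod.mk.injEq, mem_iUnion,
      QuotientGroup.eq]
    constructor
    · rintro ⟨a, b, hab, ha, hb⟩
      exact ⟨⟨_, N.inv_mem ha⟩, ⟨_, N.inv_mem hb⟩, by simpa using hab⟩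
    · rintro ⟨n, m, h⟩
      exact ⟨_, _, h, by simp, by simp⟩
  rw [hsat]
  exact .iUnion fun n => .iUnion fun m =>
    ((measurable_fst.mul_const _).prodMk (measurable_snd.mul_const _)) hU

end Measurable

variable {H : Type*} [Group H] [TopologicalSpace H] [IsTopologicalGroup H] (N : Subgroup H)

theorem exists_isOpen_one_mem_injOn_mk_smul [T1Space H] [Finite N] :
    ∃ V : Set H, IsOpen V ∧ (1 : H) ∈ V ∧ ∀ h : H, InjOn (mk : H → H ⧸ N) (h • V) := by
  have hO : ((N : Set H) \ {1})ᶜ ∈ 𝓝 (1 : H) :=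
    (Set.toFinite _).sdiff.isClosed.isOpen_compl.mem_nhds (by simp)
  obtain ⟨V, hV, hVO⟩ := exists_nhds_split_inv hO
  refine ⟨(interior V)⁻¹, isOpen_interior.inv, by simpa using mem_interior_iff_mem_nhds.mpr hV,
    fun h => ?_⟩
  rintro _ ⟨v, hv, rfl⟩ _ ⟨w, hw, rfl⟩ hvw
  have hvwN : v⁻¹ * w ∈ N := by simpa [smul_eq_mul, mul_assoc] using QuotientGroup.eq.mp hvw
  have hvwO : v⁻¹ * w ∈ ((N : Set H) \ {1})ᶜ := by
    simpa using hVO _ (interior_subset hv) _ (interior_subset hw)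
  have : v⁻¹ * w = 1 := by simpa [hvwN] using hvwO
  rw [inv_mul_eq_one.mp this]

variable [CompactSpace H] [T1Space H] [MeasurableSpace H] [BorelSpace H] [Finite N]

theorem exists_measurableSet_injOn_mk_image_eq_univ :
    ∃ D : Set H, MeasurableSet D ∧ InjOn (mk : H → H ⧸ N) D ∧
      (mk : H → H ⧸ N) '' D = univ := by
  obtain ⟨V, hV, hV1, hinj⟩ := exists_isOpen_one_mem_injOn_mk_smul N
  obtain ⟨t, ht⟩ := isCompact_univ.elim_finite_subcover (fun h : H => h • V)
    (fun h => hV.smul h) fun a _ =>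
      mem_iUnion.mpr ⟨a, by simpa using smul_mem_smul_set hV1 (a := a)⟩
  obtain ⟨D, hD, hDinj, hDim⟩ := exists_measurableSet_injOn_image_eq
    (fun _ => measurableSet_preimage_image_mk N) t (fun h => (hV.smul h).measurableSet) hinj
  refine ⟨D, hD, hDinj, ?_⟩
  rw [hDim, univ_subset_iff.mp ht, image_univ_of_surjective mk_surjective]

theorem exists_measurable_rightInverse_mk :
    ∃ s : H ⧸ N → H, Measurable s ∧ RightInverse s (mk : H → H ⧸ N) := by
  obtain ⟨D, hD, hDinj, hDim⟩ := exists_measurableSet_injOn_mk_image_eq_univ N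
  have hmem : ∀ x : H ⧸ N, x ∈ mk '' D := fun x => hDim ▸ mem_univ x
  refine ⟨invFunOn (mk : H → H ⧸ N) D, fun B hB => ?_, fun x => invFunOn_eq (hmem x)⟩
  have hpre : invFunOn (mk : H → H ⧸ N) D ⁻¹' B = (mk : H → H ⧸ N) '' (D ∩ B) := by
    ext x
    refine ⟨fun hx => ⟨_, ⟨invFunOn_mem (hmem x), hx⟩, invFunOn_eq (hmem x)⟩, ?_⟩
    rintro ⟨a, ⟨haD, haB⟩, rfl⟩
    rwa [mem_preimage, hDinj (invFunOn_mem (hmem _)) haD (invFunOn_eq (hmem _))]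
  rw [hpre]
  exact measurableSet_image_mk N (hD.inter hB)

end QuotientGroup

theorem quotient_commutator_fiber_measure_general {H : Type*} [Group H] [TopologicalSpace H]
    [IsTopologicalGroup H] [CompactSpace H] [T2Space H] [MeasurableSpace H] [BorelSpace H]
    (N : Subgroup H) [N.Normal] [Fintype N]
    (ν : Measure H) [IsProbabilityMeasure ν]
    (μ : Measure (H ⧸ N)) (hμ : μ = ν.map (QuotientGroup.mk' N))
    (g : H ⧸ N) (h₀ : H) (hh₀ : QuotientGroup.mk' N h₀ = g) :
    (μ.prod μ) {p : (H ⧸ N) × (H ⧸ N) | p.1 * p.2 * p.1⁻¹ * p.2⁻¹ = g} =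
      ∑ n : N, (ν.prod ν) {p : H × H | p.1 * p.2 * p.1⁻¹ * p.2⁻¹ = h₀ * (n : H)} := by
  set C : N → Set (H × H) := fun n => {p | p.1 * p.2 * p.1⁻¹ * p.2⁻¹ = h₀ * (n : H)}
  have hmk : Measurable (QuotientGroup.mk : H → H ⧸ N) := measurable_quotient_mk''
  obtain ⟨s, hs, hmks⟩ := QuotientGroup.exists_measurable_rightInverse_mk N
  have hprod : μ.prod μ = (ν.prod ν).map (Prod.map QuotientGroup.mk QuotientGroup.mk) := by
    rw [hμ, QuotientGroup.coe_mk']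
    exact Measure.map_prod_map ν ν hmk hmk
  have hfiber : Prod.map QuotientGroup.mk QuotientGroup.mk ⁻¹'
      {p : (H ⧸ N) × (H ⧸ N) | p.1 * p.2 * p.1⁻¹ * p.2⁻¹ = g} = ⋃ n, C n := by
    ext p
    simp only [mem_preimage, mem_ofPred_eq, mem_iUnion, Prod.map, ← hh₀,
      QuotientGroup.mk'_apply, ← QuotientGroup.mk_mul, ← QuotientGroup.mk_inv,
      eq_comm (b := (h₀ : H ⧸ N)), QuotientGroup.eq, C]
    exact ⟨fun h => ⟨⟨_, h⟩, by simp⟩, fun ⟨n, hn⟩ => by simp [hn]⟩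
  have hC : ∀ n, IsCompact (C n) := fun n =>
    (isClosed_eq (by fun_prop) continuous_const).isCompact
  have hCdisj : Pairwise (Disjoint on C) := fun n m hnm =>
    disjoint_left.mpr fun p hn hm => hnm (Subtype.ext (mul_left_cancel (hn.symm.trans hm)))
  rw [hprod, Measure.map_apply_of_rightInverse (hmk.prodMap hmk) (hs.prodMap hs)
    (fun x => Prod.ext (hmks x.1) (hmks x.2))
    (fun _ => QuotientGroup.measurableSet_preimage_image_prodMap_mk N), hfiber,
    measure_iUnion_of_isCompact_prod _ hC hCdisj, tsum_fintype]

/-- Let `H` be a compact Hausdorff topological group, `N` a finite central subgroup,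
`G = H ⧸ N` with the pushforward `μ` of the normalized Haar measure `ν` of `H` as its
normalized Haar measure. Then for `g ∈ G` and any lift `h₀ ∈ H` of `g`, the `μ²`-measure of the
commutator fiber over `g` equals `Σ_{n ∈ N} ν²(α_H⁻¹(h₀·n))`. -/
theorem quotient_commutator_fiber_measure {H : Type*} [Group H] [TopologicalSpace H]
    [IsTopologicalGroup H] [CompactSpace H] [T2Space H] [MeasurableSpace H] [BorelSpace H]
    (N : Subgroup H) [N.Normal] (hN : N ≤ Subgroup.center H) [Fintype N]
    (ν : Measure H) [ν.IsHaarMeasure] [IsProbabilityMeasure ν]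
    (μ : Measure (H ⧸ N)) (hμ : μ = ν.map (QuotientGroup.mk' N))
    (g : H ⧸ N) (h₀ : H) (hh₀ : QuotientGroup.mk' N h₀ = g) :
    (μ.prod μ) {p : (H ⧸ N) × (H ⧸ N) | p.1 * p.2 * p.1⁻¹ * p.2⁻¹ = g} =
      ∑ n : N, (ν.prod ν) {p : H × H | p.1 * p.2 * p.1⁻¹ * p.2⁻¹ = h₀ * (n : H)} :=
  quotient_commutator_fiber_measure_general N ν μ hμ g h₀ hh₀
end

section
/- Let G be a compact Lie group which is an FC group (every conjugacy class of G is finite) and let G⁰ denote the identity component of G. Then there exist a finite group Δ and a continuous surjective group homomorphism φ : G⁰ × Δ → G such that: the restriction of φ to G⁰ × {1} is the inclusion of G⁰ into G, the kernel N of φ is finite, and both coordinate projections G⁰ × Δ → G⁰ and G⁰ × Δ → Δ restrict to injective maps on N (so N embeds diagonally, consisting of elements of the form (n, n⁻¹)). -/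
/-!
The identity component `G⁰` is central: the conjugates of `g` by elements of the connected
set `G⁰` form a connected subset of a finite set. It is open (`G` is locally connected), so it
has finite index. In a chart at `1` multiplication has derivative `(u, v) ↦ u + v`, so the
`n`-th power map has derivative `n • id` and, by the inverse function theorem, is open and
injective near `1`. Hence the `n`-th powers of `G⁰` form an open subgroup of `G⁰`, so `G⁰` is
divisible, and the `n`-torsion of `G⁰` is discrete and compact, so finite.
As the centre has finite index `m`, the transfer makes `g ↦ g ^ m` a homomorphism. For a
multiple `N` of `m` with `g ^ N ∈ G⁰` for all `g`, the kernel `F` of `g ↦ g ^ N` is finite, and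
writing `g ^ N = w ^ N` with `w ∈ G⁰` gives `g = w * (w⁻¹ * g) ∈ G⁰ F`; then `φ (z, f) = z * f`.
-/

open Set Filter Topology

theorem ModelWithCorners.locallyConnectedSpace {E : Type*} [NormedAddCommGroup E] [NormedSpace ℝ E]
    {H : Type*} [TopologicalSpace H] (I : ModelWithCorners ℝ E H) : LocallyConnectedSpace H := by
  refine locallyConnectedSpace_iff_connected_subsets.2 fun x U hU => ?_
  rw [I.isClosedEmbedding.isEmbedding.nhds_eq_comap, (Metric.nhds_basis_ball.comap _).mem_iff]
    at hU
  obtain ⟨r, hr, hrU⟩ := hU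
  refine ⟨I ⁻¹' Metric.ball (I x) r, I.continuous.continuousAt.preimage_mem_nhds
    (Metric.ball_mem_nhds _ hr), ?_, hrU⟩
  have himage : I.symm '' (Metric.ball (I x) r ∩ range I) = I ⁻¹' Metric.ball (I x) r := by
    rw [← image_preimage_eq_inter_range, image_image]
    simp only [ModelWithCorners.left_inv, image_id']
  rw [← himage]
  exact ((convex_ball _ r).inter I.convex_range).isPreconnected.image _
    (I.continuousOn_symm.mono inter_subset_right)

section Calculus

variable {𝕜 : Type*} [NontriviallyNormedField 𝕜] {E : Type*} [NormedAddCommGroup E]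
  [NormedSpace 𝕜 E] {μ : E × E → E} {q : E}

open ContinuousLinearMap in
theorem HasFDerivAt.eq_fst_add_snd_of_unital {D : E × E →L[𝕜] E} (hμ : HasFDerivAt μ D (q, q))
    (hleft : ∀ᶠ u in 𝓝 q, μ (u, q) = u) (hright : ∀ᶠ v in 𝓝 q, μ (q, v) = v) :
    D = fst 𝕜 E E + snd 𝕜 E E := by
  have hinl : D.comp (inl 𝕜 E E) = ContinuousLinearMap.id 𝕜 E :=
    ((HasFDerivAt.comp (f := fun u : E => (u, q)) q hμ (hasFDerivAt_prodMk_left q q))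
      |>.congr_of_eventuallyEq (hleft.mono fun _ h => h.symm)).unique (hasFDerivAt_id q)
  have hinr : D.comp (inr 𝕜 E E) = ContinuousLinearMap.id 𝕜 E :=
    ((HasFDerivAt.comp (f := fun v : E => (q, v)) q hμ (hasFDerivAt_prodMk_right q q))
      |>.congr_of_eventuallyEq (hright.mono fun _ h => h.symm)).unique (hasFDerivAt_id q)
  refine prod_ext ?_ ?_
  · rw [hinl]; ext; simp
  · rw [hinr]; ext; simp

open ContinuousLinearMap in
theorem hasFDerivAt_natCast_smul_of_iterate (hμ : HasFDerivAt μ (fst 𝕜 E E + snd 𝕜 E E) (q, q))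
    {F : ℕ → E → E} (hF_zero : ∀ y, F 0 y = q) (hF_q : ∀ k, F k q = q)
    (hF_succ : ∀ k, F (k + 1) =ᶠ[𝓝 q] fun y => μ (F k y, y)) (k : ℕ) :
    HasFDerivAt (F k) ((k : 𝕜) • ContinuousLinearMap.id 𝕜 E) q := by
  induction k with
  | zero =>
    rw [Nat.cast_zero, zero_smul, show F 0 = fun _ => q from funext hF_zero]
    exact hasFDerivAt_const q q
  | succ k ih =>
    have hμ' : HasFDerivAt μ (fst 𝕜 E E + snd 𝕜 E E) (F k q, q) := by rwa [hF_q]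
    have hstep :=
      HasFDerivAt.comp (f := fun y => (F k y, y)) q hμ' (ih.prodMk (hasFDerivAt_id q))
    refine (hstep.congr_of_eventuallyEq (hF_succ k)).congr_fderiv ?_
    ext u
    simp [add_smul]

end Calculus

section InteriorPoint

variable {E : Type*} [NormedAddCommGroup E] [NormedSpace ℝ E]
  {H : Type*} [TopologicalSpace H] {I : ModelWithCorners ℝ E H}
  {M : Type*} [TopologicalSpace M] [ChartedSpace H M] {x : M}

namespace ModelWithCorners.IsInteriorPoint

theorem extChartAt_target_mem_nhds (hx : I.IsInteriorPoint x) :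
    (extChartAt I x).target ∈ 𝓝 (extChartAt I x x) :=
  mem_interior_iff_mem_nhds.1 (I.isInteriorPoint_iff.1 hx)

theorem map_extChartAt_nhds (hx : I.IsInteriorPoint x) :
    map (extChartAt I x) (𝓝 x) = 𝓝 (extChartAt I x x) := by
  rw [_root_.map_extChartAt_nhds, nhdsWithin_eq_nhds.2 (range_mem_nhds_isInteriorPoint hx)]

theorem map_extChartAt_symm_nhds (hx : I.IsInteriorPoint x) :
    map (extChartAt I x).symm (𝓝 (extChartAt I x x)) = 𝓝 x := by
  rw [← map_extChartAt_symm_nhdsWithin_range (I := I) x,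
    nhdsWithin_eq_nhds.2 (range_mem_nhds_isInteriorPoint hx)]

variable [CompleteSpace E] {f : M → M} {L : E ≃L[ℝ] E}

theorem map_nhds_eq_of_hasStrictFDerivAt (hx : I.IsInteriorPoint x) (hfx : f x = x)
    (hf : ContinuousAt f x)
    (hL : HasStrictFDerivAt (extChartAt I x ∘ f ∘ (extChartAt I x).symm) (L : E →L[ℝ] E)
      (extChartAt I x x)) :
    map f (𝓝 x) = 𝓝 x := by
  set e := extChartAt I x
  have hsource : e.source ∈ 𝓝 x := extChartAt_source_mem_nhds x
  have hlocal : (e.symm ∘ (e ∘ f ∘ e.symm) ∘ e) =ᶠ[𝓝 x] f := by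
    filter_upwards [hsource, hf.preimage_mem_nhds (hfx ▸ hsource)] with g hg hfg
    simp only [Function.comp_apply, e.left_inv hg, e.left_inv hfg]
  have hfixed : (e ∘ f ∘ e.symm) (e x) = e x := by
    rw [Function.comp_apply, Function.comp_apply, e.left_inv (mem_extChartAt_source x), hfx]
  rw [← map_congr hlocal, ← map_map, ← map_map, hx.map_extChartAt_nhds, hL.map_nhds_eq_of_equiv,
    hfixed, hx.map_extChartAt_symm_nhds]

end ModelWithCorners.IsInteriorPoint

variable [CompleteSpace E] {f : M → M} {L : E ≃L[ℝ] E}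

theorem exists_mem_nhds_injOn_of_hasStrictFDerivAt_extChartAt
    (hL : HasStrictFDerivAt (extChartAt I x ∘ f ∘ (extChartAt I x).symm) (L : E →L[ℝ] E)
      (extChartAt I x x)) :
    ∃ U ∈ 𝓝 x, InjOn f U := by
  set e := extChartAt I x
  set ψ := hL.localInverse _ _ _
  refine ⟨e.source ∩ e ⁻¹' {y | ψ ((e ∘ f ∘ e.symm) y) = y},
    inter_mem (extChartAt_source_mem_nhds x)
      (continuousAt_extChartAt x |>.preimage_mem_nhds hL.eventually_left_inverse), ?_⟩
  rintro g₁ ⟨hg₁, hψ₁⟩ g₂ ⟨hg₂, hψ₂⟩ hfg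
  apply e.injOn hg₁ hg₂
  simp only [mem_preimage, mem_ofPred_eq, Function.comp_apply, e.left_inv hg₁, e.left_inv hg₂]
    at hψ₁ hψ₂
  rw [← hψ₁, ← hψ₂, hfg]

end InteriorPoint

section LieGroup

variable {E : Type*} [NormedAddCommGroup E] [NormedSpace ℝ E]
  {H : Type*} [TopologicalSpace H] {I : ModelWithCorners ℝ E H}
  {G : Type*} [Group G] [TopologicalSpace G] [ChartedSpace H G] [LieGroup I (⊤ : ℕ∞) G]

variable (I G) in
/-- The model `I` may have corners; this is what makes chart representatives at `1` differentiable
in the ordinary sense. -/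
theorem LieGroup.boundarylessManifold : BoundarylessManifold I G := by
  obtain ⟨q, hq⟩ := interior_extChartAt_target_nonempty I (1 : G)
  set x₀ := (extChartAt I (1 : G)).symm q
  have hx₀ : I.IsInteriorPoint x₀ := by
    have hsource : x₀ ∈ (chartAt H (1 : G)).source := by
      rw [← extChartAt_source I]; exact (extChartAt I 1).map_target (interior_subset hq)
    rw [ModelWithCorners.isInteriorPoint_iff_of_mem_atlas one_ne_zero (chart_mem_atlas H (1 : G))
      hsource]
    rwa [← extChartAt, (extChartAt I (1 : G)).right_inv (interior_subset hq)]
  refine ⟨fun g => ?_⟩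
  let Φ : Diffeomorph I I G G 1 :=
    { toEquiv := Equiv.mulLeft (g * x₀⁻¹)
      contMDiff_toFun := contMDiff_mul_left
      contMDiff_invFun := contMDiff_mul_left }
  have hg : g = Φ x₀ := (inv_mul_cancel_right g x₀).symm
  rw [hg]
  exact (Φ.image_interior one_ne_zero).subset ⟨x₀, hx₀, rfl⟩

theorem LieGroup.isInteriorPoint (g : G) : I.IsInteriorPoint g :=
  have := LieGroup.boundarylessManifold I G
  BoundarylessManifold.isInteriorPoint

open ContinuousLinearMap in
variable (I G) in
theorem LieGroup.hasFDerivAt_mul_extChartAt_one :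
    HasFDerivAt (fun p : E × E => extChartAt I (1 : G)
      ((extChartAt I (1 : G)).symm p.1 * (extChartAt I (1 : G)).symm p.2))
      (fst ℝ E E + snd ℝ E E) (extChartAt I (1 : G) 1, extChartAt I (1 : G) 1) := by
  have h1 : I.IsInteriorPoint (1 : G) := LieGroup.isInteriorPoint 1
  have hcd := (contMDiffAt_iff.1 ((contMDiff_mul I ((⊤ : ℕ∞) : WithTop ℕ∞)).contMDiffAt
    (x := ((1 : G), (1 : G))))).2
  simp only [mul_one, extChartAt_prod] at hcd
  have hrange : range (I.prod I) ∈ 𝓝 (extChartAt I (1 : G) 1, extChartAt I (1 : G) 1) := by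
    rw [ModelWithCorners.range_prod]
    exact prod_mem_nhds (range_mem_nhds_isInteriorPoint h1) (range_mem_nhds_isInteriorPoint h1)
  have hdiff : HasFDerivAt _ _ (extChartAt I (1 : G) 1, extChartAt I (1 : G) 1) :=
    ((hcd.contDiffAt hrange).differentiableAt (by simp)).hasFDerivAt
  refine (hdiff.eq_fst_add_snd_of_unital ?_ ?_) ▸ hdiff
  · filter_upwards [h1.extChartAt_target_mem_nhds] with u hu
    simp only [Function.comp_apply, PartialEquiv.prod_symm, PartialEquiv.prod_coe]
    rw [extChartAt_to_inv, mul_one, (extChartAt I 1).right_inv hu]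
  · filter_upwards [h1.extChartAt_target_mem_nhds] with u hu
    simp only [Function.comp_apply, PartialEquiv.prod_symm, PartialEquiv.prod_coe]
    rw [extChartAt_to_inv, one_mul, (extChartAt I 1).right_inv hu]

variable (I G) in
theorem LieGroup.hasStrictFDerivAt_pow_extChartAt_one (n : ℕ) :
    HasStrictFDerivAt (extChartAt I (1 : G) ∘ (· ^ n) ∘ (extChartAt I (1 : G)).symm)
      ((n : ℝ) • ContinuousLinearMap.id ℝ E) (extChartAt I (1 : G) 1) := by
  set e := extChartAt I (1 : G)
  have h1 : I.IsInteriorPoint (1 : G) := LieGroup.isInteriorPoint 1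
  have hsucc (k : ℕ) : (e ∘ (· ^ (k + 1)) ∘ e.symm) =ᶠ[𝓝 (e 1)]
      fun y => e (e.symm ((e ∘ (· ^ k) ∘ e.symm) y) * e.symm y) := by
    have hcont : ContinuousAt (fun y => e.symm y ^ k) (e 1) :=
      (contMDiff_pow (I := I) (n := 0) k).continuous.continuousAt.comp
        (continuousAt_extChartAt_symm (1 : G))
    have hsource : e.source ∈ 𝓝 (e.symm (e 1) ^ k) := by
      rw [extChartAt_to_inv, one_pow]; exact extChartAt_source_mem_nhds 1
    filter_upwards [hcont.preimage_mem_nhds hsource] with y hy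
    simp only [Function.comp_apply, e.left_inv hy, pow_succ]
  have hderiv := hasFDerivAt_natCast_smul_of_iterate (LieGroup.hasFDerivAt_mul_extChartAt_one I G)
    (F := fun k => e ∘ (· ^ k) ∘ e.symm) (fun y => by simp [e]) (fun k => by simp [e]) hsucc n
  have hcd := (contMDiffAt_iff.1 ((contMDiff_pow (I := I) (n := ((⊤ : ℕ∞) : WithTop ℕ∞)) n)
    |>.contMDiffAt (x := (1 : G)))).2
  simp only [one_pow] at hcd
  have hstrict := (hcd.contDiffAt (range_mem_nhds_isInteriorPoint h1)).hasStrictFDerivAt (by simp)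
  rwa [hderiv.fderiv] at hstrict

theorem LieGroup.exists_hasStrictFDerivAt_pow_extChartAt_one {n : ℕ} (hn : n ≠ 0) :
    ∃ L : E ≃L[ℝ] E, HasStrictFDerivAt (extChartAt I (1 : G) ∘ (· ^ n) ∘
      (extChartAt I (1 : G)).symm) (L : E →L[ℝ] E) (extChartAt I (1 : G) 1) := by
  refine ⟨ContinuousLinearEquiv.smulLeft (Units.mk0 (n : ℝ) (Nat.cast_ne_zero.2 hn)), ?_⟩
  convert LieGroup.hasStrictFDerivAt_pow_extChartAt_one I G n
  ext
  simp [Units.smul_def]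

end LieGroup

section LieGroupPow

variable {E : Type*} [NormedAddCommGroup E] [NormedSpace ℝ E] [CompleteSpace E]
  {H : Type*} [TopologicalSpace H] {G : Type*} [Group G] [TopologicalSpace G] [ChartedSpace H G]

theorem LieGroup.map_pow_nhds_one (I : ModelWithCorners ℝ E H) [LieGroup I (⊤ : ℕ∞) G] {n : ℕ}
    (hn : n ≠ 0) : map (· ^ n) (𝓝 (1 : G)) = 𝓝 1 := by
  obtain ⟨L, hL⟩ := LieGroup.exists_hasStrictFDerivAt_pow_extChartAt_one (I := I) (G := G) hn
  exact (LieGroup.isInteriorPoint 1).map_nhds_eq_of_hasStrictFDerivAt (one_pow n)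
    (contMDiff_pow (I := I) (n := 0) n).continuous.continuousAt hL

theorem LieGroup.exists_mem_nhds_injOn_pow (I : ModelWithCorners ℝ E H) [LieGroup I (⊤ : ℕ∞) G]
    {n : ℕ} (hn : n ≠ 0) :
    ∃ U ∈ 𝓝 (1 : G), InjOn (· ^ n) U := by
  obtain ⟨L, hL⟩ := LieGroup.exists_hasStrictFDerivAt_pow_extChartAt_one (I := I) (G := G) hn
  exact exists_mem_nhds_injOn_of_hasStrictFDerivAt_extChartAt hL

end LieGroupPow

section TopologicalGroup

variable {G : Type*} [Group G] [TopologicalSpace G] [IsTopologicalGroup G]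

theorem connectedComponent_one_subset_center [T1Space G]
    (hFC : ∀ g : G, ({x : G | ∃ a : G, a * g * a⁻¹ = x} : Set G).Finite) :
    connectedComponent (1 : G) ⊆ Subgroup.center G := by
  intro z hz
  rw [SetLike.mem_coe, Subgroup.mem_center_iff]
  intro g
  have hconj : 1 * g * 1⁻¹ = z * g * z⁻¹ :=
    isPreconnected_connectedComponent.constant_of_mapsTo (hFC g).isDiscrete (by fun_prop)
      (fun a _ => ⟨a, rfl⟩) mem_connectedComponent hz
  rw [one_mul, inv_one, mul_one, eq_mul_inv_iff_mul_eq] at hconj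
  exact hconj

theorem connectedComponent_one_subset_image_pow (hopen : IsOpen (connectedComponent (1 : G)))
    (hcenter : connectedComponent (1 : G) ⊆ Subgroup.center G) {n : ℕ}
    (hn : 𝓝 (1 : G) ≤ map (· ^ n) (𝓝 1)) :
    connectedComponent (1 : G) ⊆ (· ^ n) '' connectedComponent 1 := by
  let Z := Subgroup.connectedComponentOfOne G
  let K : Subgroup G :=
    { carrier := (· ^ n) '' connectedComponent 1
      one_mem' := ⟨1, Z.one_mem, one_pow n⟩
      mul_mem' := by
        rintro _ _ ⟨x, hx, rfl⟩ ⟨y, hy, rfl⟩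
        exact ⟨x * y, Z.mul_mem hx hy,
          Commute.mul_pow (Subgroup.mem_center_iff.1 (hcenter hx) y).symm n⟩
      inv_mem' := by
        rintro _ ⟨x, hx, rfl⟩
        exact ⟨x⁻¹, Z.inv_mem hx, inv_pow x n⟩ }
  have hK : (K : Set G) ∈ 𝓝 1 := hn (image_mem_map (hopen.mem_nhds mem_connectedComponent))
  have hKopen := K.isOpen_of_mem_nhds hK
  exact IsClopen.connectedComponent_subset ⟨K.isClosed_of_isOpen hKopen, hKopen⟩ K.one_mem

theorem IsClosed.finite_of_pow_eq_one [CompactSpace G] {S : Set G} (hS : IsClosed S)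
    (hcomm : ∀ a ∈ S, ∀ b ∈ S, Commute a b) {n : ℕ} (hpow : ∀ a ∈ S, a ^ n = 1)
    {U : Set G} (hU : U ∈ 𝓝 1) (hinj : InjOn (· ^ n) U) : S.Finite := by
  refine hS.isCompact.finite (IsDiscrete.of_nhdsWithin fun a ha => le_pure_iff.2 ?_)
  have hnear : ∀ᶠ b in 𝓝 a, b * a⁻¹ ∈ U :=
    (continuous_mul_const a⁻¹).continuousAt.preimage_mem_nhds (by rwa [mul_inv_cancel])
  rw [mem_nhdsWithin_iff_eventually]
  filter_upwards [hnear] with b hb hbS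
  have hpow_eq : (b * a⁻¹) ^ n = 1 ^ n := by
    rw [(hcomm b hbS a ha).inv_right.mul_pow, hpow b hbS, inv_pow, hpow a ha, inv_one, one_pow,
      one_mul]
  exact mul_inv_eq_one.1 (hinj hb (mem_of_mem_nhds hU) hpow_eq)

end TopologicalGroup

section NoncommCoprod

variable {A B G : Type*} [Group A] [Group B] [Group G] {f : A →* G} {g : B →* G}
  {hcomm : ∀ a b, Commute (f a) (g b)}

theorem MonoidHom.injOn_fst_ker_noncommCoprod (hg : Function.Injective g) :
    InjOn Prod.fst ((f.noncommCoprod g hcomm).ker : Set (A × B)) := by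
  rintro ⟨a, b⟩ hab ⟨a', b'⟩ hab' (rfl : a = a')
  simp only [SetLike.mem_coe, MonoidHom.mem_ker, MonoidHom.noncommCoprod_apply] at hab hab'
  rw [hg (eq_inv_of_mul_eq_one_right hab |>.trans (eq_inv_of_mul_eq_one_right hab').symm)]

theorem MonoidHom.injOn_snd_ker_noncommCoprod (hf : Function.Injective f) :
    InjOn Prod.snd ((f.noncommCoprod g hcomm).ker : Set (A × B)) := by
  rintro ⟨a, b⟩ hab ⟨a', b'⟩ hab' (rfl : b = b')
  simp only [SetLike.mem_coe, MonoidHom.mem_ker, MonoidHom.noncommCoprod_apply] at hab hab'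
  rw [hf (eq_inv_of_mul_eq_one_left hab |>.trans (eq_inv_of_mul_eq_one_left hab').symm)]

end NoncommCoprod

section CentralExtension

variable {G : Type*} [Group G]

theorem mul_pow_of_index_center_dvd [(Subgroup.center G).FiniteIndex] {N : ℕ}
    (hN : (Subgroup.center G).index ∣ N) (g h : G) : (g * h) ^ N = g ^ N * h ^ N := by
  obtain ⟨j, rfl⟩ := hN
  have hmul : (g * h) ^ (Subgroup.center G).index =
      g ^ (Subgroup.center G).index * h ^ (Subgroup.center G).index := by
    simp only [← MonoidHom.transferCenterPow_apply, map_mul, Subgroup.coe_mul]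
  have hcomm : Commute (g ^ (Subgroup.center G).index) (h ^ (Subgroup.center G).index) :=
    Subgroup.mem_center_iff.1 ((Subgroup.center G).pow_index_mem g) _ |>.symm
  rw [pow_mul, pow_mul, pow_mul, hmul, hcomm.mul_pow]

theorem Subgroup.exists_finite_supplement_of_le_center (Z : Subgroup G) [Z.FiniteIndex]
    (hZ : Z ≤ Subgroup.center G) (hdiv : ∀ n ≠ 0, ∀ z ∈ Z, ∃ w ∈ Z, w ^ n = z)
    (htors : ∀ n ≠ 0, {z | z ∈ Z ∧ z ^ n = 1}.Finite) :
    ∃ F : Subgroup G, Finite F ∧ ∀ g, ∃ z ∈ Z, ∃ f ∈ F, z * f = g := by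
  have : Z.Normal := ⟨fun z hz g => by
    rwa [Subgroup.mem_center_iff.1 (hZ hz) g, mul_inv_cancel_right]⟩
  have : (Subgroup.center G).FiniteIndex := Subgroup.finiteIndex_of_le hZ
  set N := Z.index * (Subgroup.center G).index
  have hN : N ≠ 0 :=
    mul_ne_zero Subgroup.FiniteIndex.index_ne_zero Subgroup.FiniteIndex.index_ne_zero
  let P : G →* G := MonoidHom.mk' (· ^ N) (mul_pow_of_index_center_dvd (dvd_mul_left _ _))
  refine ⟨P.ker, ?_, fun g => ?_⟩
  · rw [Subgroup.finite_iff_finite_and_finiteIndex (Z.subgroupOf P.ker)]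
    refine ⟨?_, inferInstance⟩
    have := (htors N hN).to_subtype
    exact Finite.of_injective
      (fun x : Z.subgroupOf P.ker => (⟨x, x.2, x.1.2⟩ : {z | z ∈ Z ∧ z ^ N = 1}))
      fun x y h => Subtype.ext <| Subtype.ext <| by simpa using congrArg Subtype.val h
  · have hgN : g ^ N ∈ Z := by
      rw [pow_mul]; exact Z.pow_mem (Z.pow_index_mem g) _
    obtain ⟨w, hw, hwN⟩ := hdiv N hN _ hgN
    refine ⟨w, hw, w⁻¹ * g, ?_, mul_inv_cancel_left w g⟩
    rw [MonoidHom.mem_ker, MonoidHom.mk'_apply, mul_pow_of_index_center_dvd (dvd_mul_left _ _),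
      inv_pow, hwN, inv_mul_cancel]

end CentralExtension

theorem LieGroup.exists_finite_subgroup_forall_exists_mul_eq
    {E : Type*} [NormedAddCommGroup E] [NormedSpace ℝ E] [CompleteSpace E]
    {H : Type*} [TopologicalSpace H] (I : ModelWithCorners ℝ E H)
    {G : Type*} [Group G] [TopologicalSpace G] [IsTopologicalGroup G] [ChartedSpace H G]
    [LieGroup I (⊤ : ℕ∞) G] [CompactSpace G] [T1Space G]
    (hcenter : connectedComponent (1 : G) ⊆ Subgroup.center G) :
    ∃ F : Subgroup G, Finite F ∧ ∀ g, ∃ z ∈ connectedComponent (1 : G), ∃ f ∈ F, z * f = g := by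
  set Z := Subgroup.connectedComponentOfOne G
  have := I.locallyConnectedSpace
  have := ChartedSpace.locallyConnectedSpace H G
  have hopen : IsOpen (Z : Set G) := isOpen_connectedComponent
  have := Subgroup.quotient_finite_of_isOpen Z hopen
  have : Z.FiniteIndex := Subgroup.finiteIndex_of_finite_quotient
  refine Z.exists_finite_supplement_of_le_center hcenter (fun n hn z hz =>
    connectedComponent_one_subset_image_pow hopen hcenter (LieGroup.map_pow_nhds_one I hn).ge hz)
    fun n hn => ?_
  obtain ⟨U, hU, hinj⟩ := LieGroup.exists_mem_nhds_injOn_pow I (G := G) hn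
  exact (isClosed_connectedComponent.inter (isClosed_eq (continuous_pow n) continuous_const))
    |>.finite_of_pow_eq_one (fun a ha b _ => (Subgroup.mem_center_iff.1 (hcenter ha.1) b).symm)
      (fun a ha => ha.2) hU hinj

/-- Structure theorem for compact Lie FC groups: a compact Lie group `G` all of whose conjugacy
classes are finite is a quotient of `G⁰ × Δ` for a finite group `Δ`, via a continuous surjection
restricting to the inclusion on `G⁰`, whose kernel `N` is finite and projects injectively to
both factors (so `N` embeds diagonally, consisting of elements of the form `(n, n⁻¹)`). -/
theorem compact_lie_FC_structure
    {E : Type*} [NormedAddCommGroup E] [NormedSpace ℝ E] [FiniteDimensional ℝ E]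
    {H : Type*} [TopologicalSpace H] (I : ModelWithCorners ℝ E H)
    {G : Type*} [Group G] [TopologicalSpace G] [IsTopologicalGroup G] [ChartedSpace H G]
    [LieGroup I (⊤ : ℕ∞) G] [CompactSpace G] [T2Space G]
    (hFC : ∀ g : G, ({x : G | ∃ a : G, a * g * a⁻¹ = x} : Set G).Finite) :
    ∃ (Δ : Type) (_ : Group Δ) (_ : Fintype Δ) (_ : TopologicalSpace Δ)
      (φ : (↥(Subgroup.connectedComponentOfOne G) × Δ) →* G),
      DiscreteTopology Δ ∧
      Continuous φ ∧
      Function.Surjective φ ∧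
      (∀ x : ↥(Subgroup.connectedComponentOfOne G), φ (x, 1) = (x : G)) ∧
      (φ.ker : Set (↥(Subgroup.connectedComponentOfOne G) × Δ)).Finite ∧
      (∀ a b : φ.ker, (a : ↥(Subgroup.connectedComponentOfOne G) × Δ).1 =
        (b : ↥(Subgroup.connectedComponentOfOne G) × Δ).1 → a = b) ∧
      (∀ a b : φ.ker, (a : ↥(Subgroup.connectedComponentOfOne G) × Δ).2 =
        (b : ↥(Subgroup.connectedComponentOfOne G) × Δ).2 → a = b) := by
  set Z := Subgroup.connectedComponentOfOne G
  have hcenter : Z ≤ Subgroup.center G := connectedComponent_one_subset_center hFC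
  obtain ⟨F, hF, hZF⟩ := LieGroup.exists_finite_subgroup_forall_exists_mul_eq I hcenter
  obtain ⟨Δ, instGroup, instFintype, ⟨e⟩⟩ := Finite.exists_type_univ_nonempty_mulEquiv F
  let ψ : Δ →* G := F.subtype.comp e.symm.toMonoidHom
  have hψ : Function.Injective ψ := Subtype.val_injective.comp e.symm.injective
  let φ := Z.subtype.noncommCoprod ψ fun z d => (Subgroup.mem_center_iff.1 (hcenter z.2) _).symm
  let instTop : TopologicalSpace Δ := ⊥
  have instDiscrete : DiscreteTopology Δ := ⟨rfl⟩
  refine ⟨Δ, instGroup, instFintype, instTop, φ, instDiscrete, ?_, ?_, ?_, ?_,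
    fun a b h => Subtype.ext (MonoidHom.injOn_fst_ker_noncommCoprod hψ a.2 b.2 h),
    fun a b h => Subtype.ext (MonoidHom.injOn_snd_ker_noncommCoprod Z.subtype_injective a.2 b.2 h)⟩
  · exact (continuous_subtype_val.comp continuous_fst).mul
      ((continuous_of_discreteTopology (f := ψ)).comp continuous_snd)
  · intro g
    obtain ⟨z, hz, f, hf, rfl⟩ := hZF g
    exact ⟨(⟨z, hz⟩, e ⟨f, hf⟩), by simp [φ, ψ]⟩
  · intro x
    show (x : G) * ψ 1 = x
    rw [map_one, mul_one]
  · exact (Set.toFinite _).of_finite_image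
      (MonoidHom.injOn_snd_ker_noncommCoprod Z.subtype_injective)
end

section
/- Let G be a compact Hausdorff topological group whose FC-centre F = {g ∈ G : the conjugacy class of g in G is finite} is an open subgroup of G. Then for every g ∈ F, μ²(α⁻¹(g)) = μ²(α⁻¹(g) ∩ (F × F)); that is, the fiber of the commutator map of G over g has the same measure as its intersection with F × F. -/
open MeasureTheory Set Filter Function
open scoped ENNReal Pointwise

/-!
Write `T` for the fiber. Its slice over `x` is `{y | y * x * y⁻¹ = g⁻¹ * x}`, a coset of the
centralizer of `x`. When `x ∉ F` the conjugacy class of `x` is infinite, so `n` distinct conjugates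
of `x` have disjoint neighbourhoods, which yields an open neighbourhood of the centralizer with `n`
pairwise disjoint translates, hence of Haar measure at most `1/n`. Thus every slice of `T` over the
compact set `Fᶜ` lies in open sets of arbitrarily small measure, and a tube-lemma covering of `Fᶜ`
shows that `T ∩ Fᶜ ×ˢ G` is null; symmetrically for the second coordinate.
-/

section ProductNull

variable {X Y : Type*}

section Measurable

variable [MeasurableSpace X] [MeasurableSpace Y]

/-- The sets `disjointed U n ×ˢ W n` cover `S`; no measurability of `S` is needed. -/
theorem MeasureTheory.Measure.prod_le_measure_univ_mul (μ : Measure X) (ν : Measure Y) [SFinite ν]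
    {U : ℕ → Set X} (hU : ∀ n, MeasurableSet (U n)) {W : ℕ → Set Y} {ε : ℝ≥0∞}
    (hW : ∀ n, ν (W n) ≤ ε) {S : Set (X × Y)} (hSU : ∀ p ∈ S, ∃ n, p.1 ∈ U n)
    (hSW : ∀ n, ∀ p ∈ S, p.1 ∈ U n → p.2 ∈ W n) :
    μ.prod ν S ≤ μ univ * ε := by
  have hS : S ⊆ ⋃ n, disjointed U n ×ˢ W n := by
    intro p hp
    obtain ⟨n, hn⟩ := mem_iUnion.1 ((iUnion_disjointed (f := U)) ▸ mem_iUnion.2 (hSU p hp))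
    exact mem_iUnion.2 ⟨n, hn, hSW n p hp (disjointed_subset U n hn)⟩
  calc μ.prod ν S
      ≤ ∑' n, μ.prod ν (disjointed U n ×ˢ W n) := (measure_mono hS).trans (measure_iUnion_le _)
    _ ≤ ∑' n, μ (disjointed U n) * ε := by
        simp only [Measure.prod_prod]
        exact ENNReal.tsum_le_tsum fun n => mul_le_mul_right (hW n) _
    _ = μ (⋃ n, disjointed U n) * ε := by
        rw [ENNReal.tsum_mul_right,
          measure_iUnion (disjoint_disjointed U) (MeasurableSet.disjointed hU)]
    _ ≤ μ univ * ε := mul_le_mul_left (measure_mono (subset_univ _)) _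

end Measurable

variable [TopologicalSpace X] [TopologicalSpace Y]

theorem IsClosed.exists_isOpen_mem_forall_snd_mem [CompactSpace Y] {E : Set (X × Y)}
    (hE : IsClosed E) {x : X} {W : Set Y} (hW : IsOpen W) (hxW : ∀ y, (x, y) ∈ E → y ∈ W) :
    ∃ U, IsOpen U ∧ x ∈ U ∧ ∀ p ∈ E, p.1 ∈ U → p.2 ∈ W := by
  have hsub : {x} ×ˢ (univ : Set Y) ⊆ Eᶜ ∪ univ ×ˢ W := by
    rintro ⟨x', y⟩ ⟨rfl, -⟩
    by_cases hy : (x', y) ∈ E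
    · exact Or.inr ⟨trivial, hxW y hy⟩
    · exact Or.inl hy
  obtain ⟨U, V, hU, -, hxU, hV, hUV⟩ := generalized_tube_lemma isCompact_singleton isCompact_univ
    (hE.isOpen_compl.union (isOpen_univ.prod hW)) hsub
  refine ⟨U, hU, singleton_subset_iff.1 hxU, fun p hpE hpU => ?_⟩
  rcases hUV ⟨hpU, hV trivial⟩ with hp | hp
  · exact absurd hpE hp
  · exact hp.2

variable [MeasurableSpace X] [MeasurableSpace Y]

/-- A closed set need not be measurable for the product σ-algebra, so this is proved by covering
with rectangles rather than by Fubini. -/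
theorem MeasureTheory.Measure.prod_inter_prod_univ_eq_zero [OpensMeasurableSpace X]
    [CompactSpace Y] (μ : Measure X) [IsFiniteMeasure μ] (ν : Measure Y) [SFinite ν]
    {E : Set (X × Y)} (hE : IsClosed E) {K : Set X} (hK : IsCompact K)
    (hslice : ∀ x ∈ K, ∀ ε > 0, ∃ W, IsOpen W ∧ ν W ≤ ε ∧ ∀ y, (x, y) ∈ E → y ∈ W) :
    μ.prod ν (E ∩ K ×ˢ univ) = 0 := by
  rcases K.eq_empty_or_nonempty with rfl | hK₀
  · simp
  have := hK₀.to_subtype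
  have hbound : ∀ n : ℕ, μ.prod ν (E ∩ K ×ˢ univ) ≤ μ univ * (n : ℝ≥0∞)⁻¹ := by
    intro n
    have htube : ∀ x : K, ∃ U W, IsOpen U ∧ (x : X) ∈ U ∧ ν W ≤ (n : ℝ≥0∞)⁻¹ ∧
        ∀ p ∈ E, p.1 ∈ U → p.2 ∈ W := by
      rintro ⟨x, hx⟩
      obtain ⟨W, hWo, hWν, hW⟩ := hslice x hx _ (ENNReal.inv_pos.2 (ENNReal.natCast_ne_top n))
      obtain ⟨U, hU, hxU, hUW⟩ := hE.exists_isOpen_mem_forall_snd_mem hWo hW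
      exact ⟨U, W, hU, hxU, hWν, hUW⟩
    choose U W hU hxU hWν hUW using htube
    obtain ⟨f, hf⟩ := hK.isLindelof.indexed_countable_subcover U hU
      fun x hx => mem_iUnion.2 ⟨⟨x, hx⟩, hxU _⟩
    exact Measure.prod_le_measure_univ_mul μ ν (fun n => (hU (f n)).measurableSet)
      (fun m => hWν (f m)) (fun p hp => mem_iUnion.1 (hf hp.2.1))
      (fun m p hp => hUW (f m) p hp.1)
  have hlim : Tendsto (fun n : ℕ => μ univ * (n : ℝ≥0∞)⁻¹) atTop (nhds 0) := by
    simpa using ENNReal.Tendsto.const_mul ENNReal.tendsto_inv_nat_nhds_zero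
      (Or.inr (measure_ne_top μ univ))
  exact nonpos_iff_eq_zero.1 (ge_of_tendsto' hlim hbound)

theorem MeasureTheory.Measure.prod_inter_univ_prod_eq_zero [CompactSpace X] [OpensMeasurableSpace Y]
    (μ : Measure X) [SFinite μ] (ν : Measure Y) [IsFiniteMeasure ν] {E : Set (X × Y)}
    (hE : IsClosed E) {K : Set Y} (hK : IsCompact K)
    (hslice : ∀ y ∈ K, ∀ ε > 0, ∃ W, IsOpen W ∧ μ W ≤ ε ∧ ∀ x, (x, y) ∈ E → x ∈ W) :
    μ.prod ν (E ∩ univ ×ˢ K) = 0 := by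
  rw [← Measure.prod_swap]
  have h := Measure.prod_inter_prod_univ_eq_zero ν μ (hE.preimage continuous_swap) hK hslice
  rw [← preimage_swap_prod, ← preimage_inter] at h
  exact (MeasurableEquiv.prodComm.map_apply _).trans h

end ProductNull

section Conjugation

variable {G : Type*} [Group G]

theorem MeasureTheory.Measure.natCast_mul_le_measure_univ [MeasurableSpace G] [MeasurableSMul G G]
    (μ : Measure G) [μ.IsMulLeftInvariant] {O : Set G} (hO : MeasurableSet O) {n : ℕ}
    (a : Fin n → G) (ha : Pairwise (Disjoint on fun i => a i • O)) :
    n * μ O ≤ μ univ := by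
  calc (n : ℝ≥0∞) * μ O = ∑ i, μ (a i • O) := by simp
    _ = μ (⋃ i, a i • O) := by
        rw [measure_iUnion ha fun i => hO.const_smul (a i), tsum_fintype]
    _ ≤ μ univ := measure_mono (subset_univ _)

variable [TopologicalSpace G] [IsTopologicalGroup G] [T2Space G]

/-- The sets `a i • O` are disjoint because conjugating `x` by their elements lands in pairwise
disjoint neighbourhoods of `n` distinct conjugates of `x`. -/
theorem exists_isOpen_setOf_conj_eq_self_subset_pairwise_disjoint_smul {x : G}
    (hx : (conjugatesOf x).Infinite) (n : ℕ) :
    ∃ O : Set G, IsOpen O ∧ {y | y * x * y⁻¹ = x} ⊆ O ∧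
      ∃ a : Fin n → G, Pairwise (Disjoint on fun i => a i • O) := by
  let k : Fin n → G := fun i => hx.natEmbedding _ i
  have hk : Injective k := fun i j h =>
    Fin.ext (by exact_mod_cast (hx.natEmbedding _).injective (Subtype.ext h))
  choose a ha using fun i =>
    (isConj_iff.1 (hx.natEmbedding _ i).2 : ∃ c, c * x * c⁻¹ = k i)
  obtain ⟨V, hV, hVdisj⟩ := (finite_range k).t2_separation
  let conj : G → G := fun z => z * x * z⁻¹
  have hconj : Continuous conj := by fun_prop
  set O := ⋂ i, (a i)⁻¹ • conj ⁻¹' V (k i)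
  have hOV : ∀ i, a i • O ⊆ conj ⁻¹' V (k i) := fun i =>
    (smul_set_mono (iInter_subset _ i)).trans (smul_inv_smul (a i) _).subset
  refine ⟨O, isOpen_iInter_of_finite fun i => ((hV _).2.preimage hconj).smul _,
    fun y (hy : y * x * y⁻¹ = x) => mem_iInter.2 fun i => ?_, a, fun i j hij => ?_⟩
  · rw [mem_smul_set_iff_inv_smul_mem, inv_inv, smul_eq_mul, mem_preimage]
    convert (hV (k i)).1 using 1
    calc a i * y * x * (a i * y)⁻¹ = a i * (y * x * y⁻¹) * (a i)⁻¹ := by group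
      _ = k i := by rw [hy, ha i]
  · exact ((hVdisj (mem_range_self i) (mem_range_self j) (hk.ne hij)).preimage conj).mono
      (hOV i) (hOV j)

variable [MeasurableSpace G] [BorelSpace G]

theorem exists_isOpen_setOf_conj_eq_subset_measure_le (μ : Measure G) [μ.IsMulLeftInvariant]
    [IsProbabilityMeasure μ] {x : G} (hx : (conjugatesOf x).Infinite) (c : G) {ε : ℝ≥0∞}
    (hε : 0 < ε) : ∃ W, IsOpen W ∧ μ W ≤ ε ∧ {y | y * x * y⁻¹ = c} ⊆ W := by
  obtain ⟨n, hn⟩ := ENNReal.exists_inv_nat_lt hε.ne'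
  obtain ⟨O, hO, hxO, a, ha⟩ :=
    exists_isOpen_setOf_conj_eq_self_subset_pairwise_disjoint_smul hx n
  have hμO : μ O ≤ (n : ℝ≥0∞)⁻¹ := by
    rw [ENNReal.le_inv_iff_mul_le, mul_comm, ← measure_univ (μ := μ)]
    exact μ.natCast_mul_le_measure_univ hO.measurableSet a ha
  rcases eq_empty_or_nonempty {y | y * x * y⁻¹ = c} with h | ⟨y₀, hy₀⟩
  · exact ⟨∅, isOpen_empty, by simp, h.subset⟩
  refine ⟨y₀ • O, hO.smul y₀, by rw [measure_smul]; exact hμO.trans hn.le,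
    fun y (hy : y * x * y⁻¹ = c) => ?_⟩
  rw [mem_smul_set_iff_inv_smul_mem, smul_eq_mul]
  apply hxO
  calc y₀⁻¹ * y * x * (y₀⁻¹ * y)⁻¹ = y₀⁻¹ * (y * x * y⁻¹) * y₀ := by group
    _ = x := by rw [hy, ← hy₀.out]; group

end Conjugation

theorem commutator_fiber_measure_eq_inter_FC_centre_general {G : Type*} [Group G] [TopologicalSpace G]
    [IsTopologicalGroup G] [CompactSpace G] [T2Space G] [MeasurableSpace G] [BorelSpace G]
    (μ : Measure G) [μ.IsHaarMeasure] [IsProbabilityMeasure μ]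
    (F : Set G) (hF : F = {g : G | ({x : G | ∃ a : G, a * g * a⁻¹ = x} : Set G).Finite})
    (hFopen : IsOpen F) (g : G) :
    (μ.prod μ) {p : G × G | p.1 * p.2 * p.1⁻¹ * p.2⁻¹ = g} =
      (μ.prod μ) ({p : G × G | p.1 * p.2 * p.1⁻¹ * p.2⁻¹ = g} ∩ F ×ˢ F) := by
  set T := {p : G × G | p.1 * p.2 * p.1⁻¹ * p.2⁻¹ = g}
  have hT : IsClosed T := isClosed_eq (by fun_prop) continuous_const
  have hFc : IsCompact Fᶜ := hFopen.isClosed_compl.isCompact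
  have hinf : ∀ x ∉ F, (conjugatesOf x).Infinite := fun x hx => by
    simpa [hF, conjugatesOf, isConj_iff] using hx
  have hfst : μ.prod μ (T ∩ Fᶜ ×ˢ univ) = 0 := by
    refine Measure.prod_inter_prod_univ_eq_zero μ μ hT hFc fun x hx ε hε => ?_
    obtain ⟨W, hW, hWμ, hTW⟩ :=
      exists_isOpen_setOf_conj_eq_subset_measure_le μ (hinf x hx) (g⁻¹ * x) hε
    exact ⟨W, hW, hWμ, fun y (hy : x * y * x⁻¹ * y⁻¹ = g) =>
      hTW (show y * x * y⁻¹ = g⁻¹ * x by rw [← hy]; group)⟩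
  have hsnd : μ.prod μ (T ∩ univ ×ˢ Fᶜ) = 0 := by
    refine Measure.prod_inter_univ_prod_eq_zero μ μ hT hFc fun y hy ε hε => ?_
    obtain ⟨W, hW, hWμ, hTW⟩ :=
      exists_isOpen_setOf_conj_eq_subset_measure_le μ (hinf y hy) (g * y) hε
    exact ⟨W, hW, hWμ, fun x (hx : x * y * x⁻¹ * y⁻¹ = g) =>
      hTW (show x * y * x⁻¹ = g * y by rw [← hx]; group)⟩
  have hdiff : μ.prod μ (T \ F ×ˢ F) = 0 := by
    refine measure_mono_null (fun p ⟨hpT, hpF⟩ => ?_) (measure_union_null hfst hsnd)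
    by_cases hp : p.1 ∈ F
    · exact Or.inr ⟨hpT, trivial, fun hp2 => hpF ⟨hp, hp2⟩⟩
    · exact Or.inl ⟨hpT, hp, trivial⟩
  rw [← measure_inter_add_sdiff T (hFopen.measurableSet.prod hFopen.measurableSet), hdiff,
    add_zero]

/-- Let `G` be a compact Hausdorff topological group whose FC-centre
`F = {g : conjugacy class of g is finite}` is open. Then for every `g ∈ F`, the fiber of the
commutator map over `g` has the same `μ × μ`-measure as its intersection with `F × F`. -/
theorem commutator_fiber_measure_eq_inter_FC_centre {G : Type*} [Group G] [TopologicalSpace G]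
    [IsTopologicalGroup G] [CompactSpace G] [T2Space G] [MeasurableSpace G] [BorelSpace G]
    (μ : Measure G) [μ.IsHaarMeasure] [IsProbabilityMeasure μ]
    (F : Set G) (hF : F = {g : G | ({x : G | ∃ a : G, a * g * a⁻¹ = x} : Set G).Finite})
    (hFopen : IsOpen F) (g : G) (hg : g ∈ F) :
    (μ.prod μ) {p : G × G | p.1 * p.2 * p.1⁻¹ * p.2⁻¹ = g} =
      (μ.prod μ) ({p : G × G | p.1 * p.2 * p.1⁻¹ * p.2⁻¹ = g} ∩ F ×ˢ F) :=
  commutator_fiber_measure_eq_inter_FC_centre_general μ F hF hFopen g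
end
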